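/- arXiv:1801.05762 — 5 statements merged into one kernel-verified Lean document; each statement's English description precedes it below -/
import Mathlib

section
/- Suppose z₀ ∈ U = U₀ × U₁ × U₂ satisfies δ₀(z₀) ≠ 0. Then there exist two bounded open neighborhoods U'' ⊆ U' of z₀ in U and a constant c ∈ (0,1] with the following properties: (i) the map φ₁ is injective when restricted to π₁(U') ⊆ ℝ^{2+m₁}; and for all real numbers N ≥ c⁻¹: (ii) the map ψ_N restricted to U' is injective and is an open map into ℝ^m; (iii) vol(ψ_N(U'')) ≥ c·N^{2+m₁}; (iv) B_c(ψ_N(U'')) ⊆ ψ_N(U'). -/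
open MeasureTheory
open scoped ENNReal

/-- The `m × m` matrix (`m = 2 + m₁ + m₂`) whose columns are
`∂φ₁/∂w₁, ∂φ₁/∂w₂, ∂φ₁/∂x₁, …, ∂φ₁/∂x_{m₁}, −∂φ₂/∂y₁, …, −∂φ₂/∂y_{m₂}`
evaluated at `z = (w, x, y)`; its determinant is `δ₀(z)`. -/
noncomputable def jacobianMatrix (m₁ m₂ : ℕ)
    (φ₁ : (Fin 2 → ℝ) × (Fin m₁ → ℝ) → (Fin (2 + m₁ + m₂) → ℝ))
    (φ₂ : (Fin 2 → ℝ) × (Fin m₂ → ℝ) → (Fin (2 + m₁ + m₂) → ℝ))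
    (z : (Fin 2 → ℝ) × (Fin m₁ → ℝ) × (Fin m₂ → ℝ)) :
    Matrix (Fin (2 + m₁ + m₂)) (Fin (2 + m₁ + m₂)) ℝ :=
  Matrix.of fun i j =>
    Sum.elim
      (Sum.elim
        (fun a : Fin 2 => fderiv ℝ φ₁ (z.1, z.2.1) (Pi.single a 1, 0) i)
        (fun b : Fin m₁ => fderiv ℝ φ₁ (z.1, z.2.1) (0, Pi.single b 1) i))
      (fun c : Fin m₂ => - fderiv ℝ φ₂ (z.1, z.2.2) (0, Pi.single c 1) i)
      (((Equiv.sumCongr finSumFinEquiv (Equiv.refl (Fin m₂))).trans finSumFinEquiv).symm j)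

/-!
Rescale the first two groups of variables: `S_N (w, x, y) = (N w, N x, y)` (`scaleEquiv`).
The derivative of `ψ_N ∘ S_N⁻¹` at `S_N z` is `rescaledFDeriv φ₁ φ₂ N⁻¹ z`, which depends
continuously on `(N⁻¹, z)` and at `(0, z₀)` is the invertible map whose matrix is
`jacobianMatrix … z₀`. So on a ball of radius `r` around `z₀`, and for `N ≥ r⁻¹`, the map
`ψ_N ∘ S_N⁻¹` is a small perturbation of one fixed invertible linear map `A`. This makes it
injective and open, and its image of a ball of radius `ρ` contains a ball of radius comparable
to `ρ`; since `S_N⁻¹` is `1`-Lipschitz for `N ≥ 1`, this yields (ii) and (iv). Restricting to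
`y = y₀` gives (i) in the same way. The volume bound (iii) is the change of variables formula,
with `det Dψ_N(z) = N ^ (2 + m₁) · det (rescaledFDeriv φ₁ φ₂ N⁻¹ z)`.
-/

open Set Metric Filter Topology
open scoped NNReal

noncomputable section

section General

variable {G H : Type*} [NormedAddCommGroup G] [NormedSpace ℝ G] [NormedAddCommGroup H]
  [NormedSpace ℝ H]

lemma Convex.approximatesLinearOn {f : G → H} {f' : G → G →L[ℝ] H} {A : G →L[ℝ] H}
    {s : Set G} {c : ℝ≥0} (hs : Convex ℝ s) (hf : ∀ x ∈ s, HasFDerivWithinAt f (f' x) s x)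
    (hbound : ∀ x ∈ s, ‖f' x - A‖ ≤ c) : ApproximatesLinearOn f A s c :=
  fun _ hx _ hy => hs.norm_image_sub_le_of_norm_hasFDerivWithin_le' hf hbound hy hx

lemma ApproximatesLinearOn.injOn_of_antilipschitz {f : G → H} {A : G →L[ℝ] H} {s : Set G}
    {c K : ℝ≥0} (hf : ApproximatesLinearOn f A s c) (hA : AntilipschitzWith K A)
    (hc : c < K⁻¹) : InjOn f s := by
  have h := (hA.domRestrict s).add_lipschitzWith hf.lipschitz_sub hc
  refine injOn_iff_injective.2 ?_
  convert h.injective using 1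
  funext x
  simp

lemma exists_pos_forall_abs_le_of_eventually {X : Type*} [PseudoMetricSpace X] {x₀ : X}
    {P : ℝ → X → Prop} (h : ∀ᶠ p : ℝ × X in 𝓝 (0, x₀), P p.1 p.2) :
    ∃ r > 0, ∀ t x, |t| ≤ r → x ∈ closedBall x₀ r → P t x := by
  obtain ⟨ε, hε, H⟩ := Metric.eventually_nhds_iff.1 h
  refine ⟨ε / 2, half_pos hε, fun t x ht hx => H (y := (t, x)) ?_⟩
  rw [Prod.dist_eq, Real.dist_0_eq_abs]
  exact max_lt (by linarith) (by linarith [mem_closedBall.1 hx])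

lemma ContinuousLinearMap.det_comp_comp_symm (L : G →L[ℝ] H) (T : G →L[ℝ] G) (e : G ≃L[ℝ] H) :
    ((L.comp T).comp (e.symm : H →L[ℝ] G)).det
      = (L.comp (e.symm : H →L[ℝ] G)).det * LinearMap.det (T : G →ₗ[ℝ] G) := by
  have h : (((L.comp T).comp (e.symm : H →L[ℝ] G) : H →L[ℝ] H) : H →ₗ[ℝ] H)
      = ((L.comp (e.symm : H →L[ℝ] G) : H →L[ℝ] H) : H →ₗ[ℝ] H) ∘ₗ
        ((e.toLinearEquiv : G →ₗ[ℝ] H) ∘ₗ (T : G →ₗ[ℝ] G) ∘ₗ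
          (e.toLinearEquiv.symm : H →ₗ[ℝ] G)) := by
    ext; simp
  rw [ContinuousLinearMap.det, h, LinearMap.det_comp, LinearMap.det_conj]

lemma ofReal_mul_addHaar_image_le_of_le_abs_det [FiniteDimensional ℝ H] [MeasurableSpace H]
    [BorelSpace H] (μ : Measure H) [μ.IsAddHaarMeasure] (e : G ≃L[ℝ] H) {g : G → H}
    {g' : G → G →L[ℝ] H} {s : Set G} {δ : ℝ} (hs : IsOpen s)
    (hg : ∀ z ∈ s, HasFDerivAt g (g' z) z) (hinj : InjOn g s)
    (hδ : ∀ z ∈ s, δ ≤ |((g' z).comp (e.symm : H →L[ℝ] G)).det|) :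
    ENNReal.ofReal δ * μ (e '' s) ≤ μ (g '' s) := by
  have hs' : MeasurableSet (e '' s) := (e.toHomeomorph.isOpenMap s hs).measurableSet
  have key := lintegral_abs_det_fderiv_le_addHaar_image μ hs'
    (f := g ∘ e.symm) (f' := fun y => (g' (e.symm y)).comp (e.symm : H →L[ℝ] G))
    (by
      rintro _ ⟨z, hz, rfl⟩
      exact ((hg _ (by simpa using hz)).comp _ e.symm.hasFDerivAt).hasFDerivWithinAt)
    (hinj.comp e.symm.injective.injOn (by rintro _ ⟨z, hz, rfl⟩; simpa using hz))
  calc ENNReal.ofReal δ * μ (e '' s) = ∫⁻ _ in e '' s, ENNReal.ofReal δ ∂μ :=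
        (setLIntegral_const _ _).symm
    _ ≤ ∫⁻ y in e '' s, ENNReal.ofReal |((g' (e.symm y)).comp (e.symm : H →L[ℝ] G)).det| ∂μ :=
        setLIntegral_mono' hs' (by
          rintro _ ⟨z, hz, rfl⟩
          exact ENNReal.ofReal_le_ofReal (by simpa using hδ z hz))
    _ ≤ μ ((g ∘ e.symm) '' (e '' s)) := key
    _ = μ (g '' s) := by rw [image_comp, e.symm_image_image]

end General

section Psi

variable {E₀ E₁ E₂ F : Type*}
  [NormedAddCommGroup E₀] [NormedSpace ℝ E₀] [NormedAddCommGroup E₁] [NormedSpace ℝ E₁]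
  [NormedAddCommGroup E₂] [NormedSpace ℝ E₂] [NormedAddCommGroup F] [NormedSpace ℝ F]

local notation "E" => E₀ × E₁ × E₂

def psi (φ₁ : E₀ × E₁ → F) (φ₂ : E₀ × E₂ → F) (N : ℝ) (z : E) : F :=
  N • φ₁ (z.1, z.2.1) - φ₂ (z.1, z.2.2)

def scaleEquiv (a : ℝˣ) : E ≃L[ℝ] E :=
  (ContinuousLinearEquiv.smulLeft a).prodCongr
    ((ContinuousLinearEquiv.smulLeft a).prodCongr (ContinuousLinearEquiv.refl ℝ E₂))

@[simp]
lemma scaleEquiv_apply (a : ℝˣ) (z : E) :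
    scaleEquiv a z = ((a : ℝ) • z.1, (a : ℝ) • z.2.1, z.2.2) := rfl

@[simp]
lemma scaleEquiv_symm_apply (a : ℝˣ) (z : E) :
    (scaleEquiv a).symm z = ((a : ℝ)⁻¹ • z.1, (a : ℝ)⁻¹ • z.2.1, z.2.2) := by
  rw [ContinuousLinearEquiv.symm_apply_eq]
  simp [smul_smul]

lemma norm_scaleEquiv_symm_le {a : ℝˣ} (ha : 1 ≤ (a : ℝ)) (z : E) :
    ‖(scaleEquiv a).symm z‖ ≤ ‖z‖ := by
  have ha' : ‖(a : ℝ)⁻¹‖ ≤ 1 := by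
    rw [norm_inv, Real.norm_eq_abs, abs_of_pos (by linarith)]
    exact inv_le_one_of_one_le₀ ha
  simp only [scaleEquiv_symm_apply, Prod.norm_def, norm_smul]
  gcongr <;> exact mul_le_of_le_one_left (norm_nonneg _) ha'

lemma det_scaleEquiv [FiniteDimensional ℝ E₀] [FiniteDimensional ℝ E₁] [FiniteDimensional ℝ E₂]
    (a : ℝˣ) :
    LinearMap.det (((scaleEquiv a : E ≃L[ℝ] E) : E →L[ℝ] E) : E →ₗ[ℝ] E)
      = (a : ℝ) ^ (Module.finrank ℝ E₀ + Module.finrank ℝ E₁) := by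
  have : (((scaleEquiv a : E ≃L[ℝ] E) : E →L[ℝ] E) : E →ₗ[ℝ] E)
      = ((a : ℝ) • LinearMap.id).prodMap (((a : ℝ) • LinearMap.id).prodMap LinearMap.id) := rfl
  rw [this, LinearMap.det_prodMap, LinearMap.det_prodMap, LinearMap.det_smul,
    LinearMap.det_smul]
  simp [pow_add]

def rescaledFDeriv (φ₁ : E₀ × E₁ → F) (φ₂ : E₀ × E₂ → F) (t : ℝ) (z : E) :
    E →L[ℝ] F :=
  (fderiv ℝ φ₁ (z.1, z.2.1)).comp
      ((ContinuousLinearMap.fst ℝ E₀ _).prod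
        ((ContinuousLinearMap.fst ℝ E₁ E₂).comp (ContinuousLinearMap.snd ℝ E₀ _)))
    - t • (fderiv ℝ φ₂ (z.1, z.2.2)).comp ((ContinuousLinearMap.fst ℝ E₀ _).prod 0)
    - (fderiv ℝ φ₂ (z.1, z.2.2)).comp
      ((0 : E →L[ℝ] E₀).prod
        ((ContinuousLinearMap.snd ℝ E₁ E₂).comp (ContinuousLinearMap.snd ℝ E₀ _)))

@[simp]
lemma rescaledFDeriv_apply (φ₁ : E₀ × E₁ → F) (φ₂ : E₀ × E₂ → F) (t : ℝ) (z u : E) :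
    rescaledFDeriv φ₁ φ₂ t z u = fderiv ℝ φ₁ (z.1, z.2.1) (u.1, u.2.1)
      - t • fderiv ℝ φ₂ (z.1, z.2.2) (u.1, 0) - fderiv ℝ φ₂ (z.1, z.2.2) (0, u.2.2) := rfl

variable {φ₁ : E₀ × E₁ → F} {φ₂ : E₀ × E₂ → F}

lemma continuousAt_rescaledFDeriv {t : ℝ} {z : E} (h₁ : ContinuousAt (fderiv ℝ φ₁) (z.1, z.2.1))
    (h₂ : ContinuousAt (fderiv ℝ φ₂) (z.1, z.2.2)) :
    ContinuousAt (fun p : ℝ × E => rescaledFDeriv φ₁ φ₂ p.1 p.2) (t, z) := by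
  have h₁' : ContinuousAt (fun p : ℝ × E => fderiv ℝ φ₁ (p.2.1, p.2.2.1)) (t, z) :=
    h₁.comp (f := fun p : ℝ × E => (p.2.1, p.2.2.1)) (by fun_prop)
  have h₂' : ContinuousAt (fun p : ℝ × E => fderiv ℝ φ₂ (p.2.1, p.2.2.2)) (t, z) :=
    h₂.comp (f := fun p : ℝ × E => (p.2.1, p.2.2.2)) (by fun_prop)
  unfold rescaledFDeriv
  exact (h₁'.clm_comp continuousAt_const).sub
    (continuousAt_fst.smul (h₂'.clm_comp continuousAt_const)) |>.sub
    (h₂'.clm_comp continuousAt_const)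

lemma hasFDerivAt_psi {a : ℝˣ} {z : E}
    (h₁ : DifferentiableAt ℝ φ₁ (z.1, z.2.1)) (h₂ : DifferentiableAt ℝ φ₂ (z.1, z.2.2)) :
    HasFDerivAt (psi φ₁ φ₂ a)
      ((rescaledFDeriv φ₁ φ₂ (a : ℝ)⁻¹ z).comp ((scaleEquiv a : E ≃L[ℝ] E) : E →L[ℝ] E)) z := by
  have hπ₁ : HasFDerivAt (fun z : E => (z.1, z.2.1))
      ((ContinuousLinearMap.fst ℝ E₀ _).prod
        ((ContinuousLinearMap.fst ℝ E₁ E₂).comp (ContinuousLinearMap.snd ℝ E₀ _))) z :=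
    hasFDerivAt_fst.prodMk (hasFDerivAt_fst.comp z hasFDerivAt_snd)
  have hπ₂ : HasFDerivAt (fun z : E => (z.1, z.2.2))
      ((ContinuousLinearMap.fst ℝ E₀ _).prod
        ((ContinuousLinearMap.snd ℝ E₁ E₂).comp (ContinuousLinearMap.snd ℝ E₀ _))) z :=
    hasFDerivAt_fst.prodMk (hasFDerivAt_snd.comp z hasFDerivAt_snd)
  refine (((h₁.hasFDerivAt.comp z hπ₁).const_smul (a : ℝ)).sub
    (h₂.hasFDerivAt.comp z hπ₂)).congr_fderiv (ContinuousLinearMap.ext fun u => ?_)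
  simp only [sub_apply, smul_apply, ContinuousLinearMap.comp_apply, rescaledFDeriv_apply,
    ContinuousLinearEquiv.coe_coe, scaleEquiv_apply, ContinuousLinearMap.prod_apply,
    ContinuousLinearMap.coe_fst', ContinuousLinearMap.coe_snd']
  have e₁ : ((a : ℝ) • u.1, (a : ℝ) • u.2.1) = (a : ℝ) • (u.1, u.2.1) := rfl
  have e₂ : ((a : ℝ) • u.1, (0 : E₂)) = (a : ℝ) • (u.1, 0) := by simp
  have e₃ : (u.1, u.2.2) = (u.1, (0 : E₂)) + (0, u.2.2) := by simp
  rw [e₁, e₂, e₃, map_smul, map_smul, smul_smul, inv_mul_cancel₀ a.ne_zero, one_smul, map_add]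
  abel

lemma hasFDerivAt_psi_comp_scaleEquiv_symm {a : ℝˣ} {u : E}
    (h₁ : DifferentiableAt ℝ φ₁ (((scaleEquiv a).symm u).1, ((scaleEquiv a).symm u).2.1))
    (h₂ : DifferentiableAt ℝ φ₂ (((scaleEquiv a).symm u).1, ((scaleEquiv a).symm u).2.2)) :
    HasFDerivAt (psi φ₁ φ₂ a ∘ (scaleEquiv a).symm)
      (rescaledFDeriv φ₁ φ₂ (a : ℝ)⁻¹ ((scaleEquiv a).symm u)) u :=
  ((hasFDerivAt_psi h₁ h₂).comp u (scaleEquiv a : E ≃L[ℝ] E).symm.hasFDerivAt).congr_fderiv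
    (ContinuousLinearMap.ext fun v => by simp)

lemma approximatesLinearOn_psi_comp_scaleEquiv_symm {z₀ : E} {r : ℝ} {κ : ℝ≥0}
    {A : E →L[ℝ] F} {a : ℝˣ}
    (hd : ∀ z ∈ closedBall z₀ r,
      DifferentiableAt ℝ φ₁ (z.1, z.2.1) ∧ DifferentiableAt ℝ φ₂ (z.1, z.2.2))
    (hL : ∀ t z, |t| ≤ r → z ∈ closedBall z₀ r → ‖rescaledFDeriv φ₁ φ₂ t z - A‖ ≤ κ)
    (ha : |(a : ℝ)⁻¹| ≤ r) :
    ApproximatesLinearOn (psi φ₁ φ₂ a ∘ (scaleEquiv a).symm) A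
      ((scaleEquiv a).symm ⁻¹' closedBall z₀ r) κ := by
  have hT : Convex ℝ ((scaleEquiv a).symm ⁻¹' closedBall z₀ r) :=
    (convex_closedBall z₀ r).linear_preimage
      (scaleEquiv a : E ≃L[ℝ] E).symm.toLinearEquiv.toLinearMap
  exact hT.approximatesLinearOn (fun _ hu =>
    (hasFDerivAt_psi_comp_scaleEquiv_symm (hd _ hu).1 (hd _ hu).2).hasFDerivWithinAt)
    fun _ hu => hL _ _ ha hu

section Approximation

variable {a : ℝˣ} {A : (E₀ × E₁ × E₂) ≃L[ℝ] F}
  {κ : ℝ≥0} {s : Set (E₀ × E₁ × E₂)}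

lemma psi_comp_scaleEquiv_symm_comp :
    (psi φ₁ φ₂ a ∘ (scaleEquiv a).symm) ∘ scaleEquiv a = psi φ₁ φ₂ a := by
  rw [Function.comp_assoc, ContinuousLinearEquiv.symm_comp_self, Function.comp_id]

lemma injOn_psi
    (hf : ApproximatesLinearOn (psi φ₁ φ₂ a ∘ (scaleEquiv a).symm) (A : E →L[ℝ] F)
      ((scaleEquiv a).symm ⁻¹' s) κ) (hκ : κ < ‖(A.symm : F →L[ℝ] E)‖₊⁻¹) :
    InjOn (psi φ₁ φ₂ a) s := by
  rw [← psi_comp_scaleEquiv_symm_comp]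
  exact (hf.injOn (Or.inr hκ)).comp (scaleEquiv a).injective.injOn fun z hz => by simpa using hz

lemma isOpen_image_psi [CompleteSpace E₀] [CompleteSpace E₁] [CompleteSpace E₂]
    (hf : ApproximatesLinearOn (psi φ₁ φ₂ a ∘ (scaleEquiv a).symm) (A : E →L[ℝ] F)
      ((scaleEquiv a).symm ⁻¹' s) κ) (hκ : κ < ‖(A.symm : F →L[ℝ] E)‖₊⁻¹)
    {V : Set E} (hVs : V ⊆ s) (hV : IsOpen V) : IsOpen (psi φ₁ φ₂ a '' V) := by
  rw [← psi_comp_scaleEquiv_symm_comp, image_comp]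
  have hVT : scaleEquiv a '' V ⊆ (scaleEquiv a).symm ⁻¹' s := by
    rintro _ ⟨z, hz, rfl⟩
    simpa using hVs hz
  exact (hf.mono_set hVT).open_image
    A.toNonlinearRightInverse ((scaleEquiv a).isOpenMap V hV) (Or.inr hκ)

lemma scaleEquiv_symm_mem_ball (ha : 1 ≤ (a : ℝ)) {z₀ z v : E} {r : ℝ}
    (hz : z ∈ ball z₀ (r / 2)) (hv : v ∈ closedBall (scaleEquiv a z) (r / 2)) :
    (scaleEquiv a).symm v ∈ ball z₀ r := by
  have hv' : dist ((scaleEquiv a).symm v) z ≤ r / 2 := by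
    rw [dist_eq_norm, ← (scaleEquiv a).symm_apply_apply z, ← map_sub]
    exact (norm_scaleEquiv_symm_le ha _).trans (mem_closedBall_iff_norm.1 hv)
  calc dist ((scaleEquiv a).symm v) z₀ ≤ dist ((scaleEquiv a).symm v) z + dist z z₀ :=
        dist_triangle _ _ _
    _ < r / 2 + r / 2 := add_lt_add_of_le_of_lt hv' hz
    _ = r := add_halves r

lemma ball_subset_image_psi [CompleteSpace E₀] [CompleteSpace E₁] [CompleteSpace E₂]
    {z₀ : E} {r : ℝ}
    (hf : ApproximatesLinearOn (psi φ₁ φ₂ a ∘ (scaleEquiv a).symm) (A : E →L[ℝ] F)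
      ((scaleEquiv a).symm ⁻¹' closedBall z₀ r) κ) (hκ : 2 * κ ≤ ‖(A.symm : F →L[ℝ] E)‖₊⁻¹)
    (ha : 1 ≤ (a : ℝ)) {z : E} (hz : z ∈ ball z₀ (r / 2)) :
    ball (psi φ₁ φ₂ a z) (κ * (r / 2)) ⊆ psi φ₁ φ₂ a '' ball z₀ r := by
  have hr : 0 ≤ r / 2 := by linarith [dist_nonneg.trans_lt (mem_ball.1 hz)]
  have hsurj := hf.surjOn_closedBall_of_nonlinearRightInverse A.toNonlinearRightInverse hr
    fun v hv => ball_subset_closedBall (scaleEquiv_symm_mem_ball ha hz hv)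
  have hκ' : (κ : ℝ) ≤ (‖(A.symm : F →L[ℝ] E)‖₊ : ℝ)⁻¹ - κ := by
    have : (2 * κ : ℝ) ≤ (‖(A.symm : F →L[ℝ] E)‖₊ : ℝ)⁻¹ := by exact_mod_cast hκ
    linarith
  intro y hy
  obtain ⟨x, hx, rfl⟩ := hsurj (mem_closedBall.2 (by
    simp only [Function.comp_apply, ContinuousLinearEquiv.symm_apply_apply]
    exact (mem_ball.1 hy).le.trans (mul_le_mul_of_nonneg_right hκ' hr)))
  exact ⟨_, scaleEquiv_symm_mem_ball ha hz hx, rfl⟩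

lemma injOn_isOpen_image_ball_subset_image_psi [CompleteSpace E₀] [CompleteSpace E₁]
    [CompleteSpace E₂] {z₀ : E} {r : ℝ}
    (hd : ∀ z ∈ closedBall z₀ r,
      DifferentiableAt ℝ φ₁ (z.1, z.2.1) ∧ DifferentiableAt ℝ φ₂ (z.1, z.2.2))
    (hL : ∀ t z, |t| ≤ r → z ∈ closedBall z₀ r → ‖rescaledFDeriv φ₁ φ₂ t z - A‖ ≤ κ)
    (hκ : κ < ‖(A.symm : F →L[ℝ] E)‖₊⁻¹) (hκ₂ : 2 * κ ≤ ‖(A.symm : F →L[ℝ] E)‖₊⁻¹)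
    (ha₁ : 1 ≤ (a : ℝ)) (ha : |(a : ℝ)⁻¹| ≤ r) :
    InjOn (psi φ₁ φ₂ a) (ball z₀ r) ∧
      (∀ V ⊆ ball z₀ r, IsOpen V → IsOpen (psi φ₁ φ₂ a '' V)) ∧
      ∀ z ∈ ball z₀ (r / 2), ball (psi φ₁ φ₂ a z) (κ * (r / 2)) ⊆ psi φ₁ φ₂ a '' ball z₀ r := by
  have hf := approximatesLinearOn_psi_comp_scaleEquiv_symm hd hL ha
  have hf' := hf.mono_set (preimage_mono ball_subset_closedBall)
  exact ⟨injOn_psi hf' hκ, fun V hV hVo => isOpen_image_psi hf' hκ hV hVo,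
    fun z hz => ball_subset_image_psi hf hκ₂ ha₁ hz⟩

end Approximation

lemma ofReal_mul_pow_le_addHaar_image_psi [FiniteDimensional ℝ E₀] [FiniteDimensional ℝ E₁]
    [FiniteDimensional ℝ E₂] [MeasurableSpace F] [BorelSpace F] (μ : Measure F)
    [μ.IsAddHaarMeasure] (e : E ≃L[ℝ] F) {a : ℝˣ} {s : Set E} {c δ : ℝ} (ha : 0 < (a : ℝ))
    (hs : IsOpen s) (hs' : Bornology.IsBounded s)
    (hd : ∀ z ∈ s, DifferentiableAt ℝ φ₁ (z.1, z.2.1) ∧ DifferentiableAt ℝ φ₂ (z.1, z.2.2))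
    (hδ : ∀ z ∈ s, δ ≤ |((rescaledFDeriv φ₁ φ₂ (a : ℝ)⁻¹ z).comp (e.symm : F →L[ℝ] E)).det|)
    (hinj : InjOn (psi φ₁ φ₂ a) s) (hc : c ≤ δ * (μ (e '' s)).toReal) :
    ENNReal.ofReal (c * (a : ℝ) ^ (Module.finrank ℝ E₀ + Module.finrank ℝ E₁))
      ≤ μ (psi φ₁ φ₂ a '' s) := by
  have : FiniteDimensional ℝ F := e.toLinearEquiv.finiteDimensional
  have hfin : μ (e '' s) ≠ ∞ := (e.lipschitz.isBounded_image hs').measure_lt_top.ne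
  calc ENNReal.ofReal (c * (a : ℝ) ^ (Module.finrank ℝ E₀ + Module.finrank ℝ E₁))
      ≤ ENNReal.ofReal (δ * (a : ℝ) ^ (Module.finrank ℝ E₀ + Module.finrank ℝ E₁)
          * (μ (e '' s)).toReal) := by
        rw [mul_right_comm]
        exact ENNReal.ofReal_le_ofReal (mul_le_mul_of_nonneg_right hc (by positivity))
    _ = ENNReal.ofReal (δ * (a : ℝ) ^ (Module.finrank ℝ E₀ + Module.finrank ℝ E₁))
          * μ (e '' s) := by
        rw [ENNReal.ofReal_mul' ENNReal.toReal_nonneg, ENNReal.ofReal_toReal hfin]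
    _ ≤ μ (psi φ₁ φ₂ a '' s) := by
        refine ofReal_mul_addHaar_image_le_of_le_abs_det μ e hs
          (fun z hz => hasFDerivAt_psi (hd z hz).1 (hd z hz).2) hinj fun z hz => ?_
        rw [ContinuousLinearMap.det_comp_comp_symm, det_scaleEquiv, abs_mul, abs_pow,
          abs_of_pos ha]
        exact mul_le_mul_of_nonneg_right (hδ z hz) (by positivity)

lemma injOn_image_fst {A : E ≃L[ℝ] F} {κ : ℝ≥0} {z₀ : E} {r : ℝ}
    (hd : ∀ z ∈ closedBall z₀ r, DifferentiableAt ℝ φ₁ (z.1, z.2.1))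
    (hL : ∀ z ∈ closedBall z₀ r, ‖rescaledFDeriv φ₁ φ₂ 0 z - A‖ ≤ κ)
    (hκ : κ < ‖(A.symm : F →L[ℝ] E)‖₊⁻¹) :
    InjOn φ₁ ((fun z : E => (z.1, z.2.1)) '' ball z₀ r) := by
  let ι : (E₀ × E₁) →L[ℝ] E :=
    (ContinuousLinearMap.fst ℝ E₀ E₁).prod ((ContinuousLinearMap.snd ℝ E₀ E₁).prod 0)
  have hι : ∀ p, ‖ι p‖ = ‖p‖ := fun p => by simp [ι, Prod.norm_def]
  have hι₁ : ‖ι‖ ≤ 1 := ι.opNorm_le_bound zero_le_one fun p => by rw [hι, one_mul]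
  have hlift : ∀ p ∈ ball (z₀.1, z₀.2.1) r, ((p.1, p.2, z₀.2.2) : E) ∈ closedBall z₀ r :=
    fun p hp => by
      have := (mem_ball.1 hp).le
      rw [Prod.dist_eq] at this
      simpa [Prod.dist_eq] using this
  have hderiv : ∀ p ∈ ball (z₀.1, z₀.2.1) r, ‖fderiv ℝ φ₁ p - (A : E →L[ℝ] F).comp ι‖ ≤ κ := by
    intro p hp
    have hfd : fderiv ℝ φ₁ p = (rescaledFDeriv φ₁ φ₂ 0 (p.1, p.2, z₀.2.2)).comp ι := by
      ext v <;> simp [ι, Prod.mk_zero_zero]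
    rw [hfd]
    calc ‖(rescaledFDeriv φ₁ φ₂ 0 (p.1, p.2, z₀.2.2)).comp ι - (A : E →L[ℝ] F).comp ι‖
        = ‖(rescaledFDeriv φ₁ φ₂ 0 (p.1, p.2, z₀.2.2) - A).comp ι‖ := by
          rw [ContinuousLinearMap.sub_comp]
      _ ≤ ‖rescaledFDeriv φ₁ φ₂ 0 (p.1, p.2, z₀.2.2) - A‖ * ‖ι‖ :=
          ContinuousLinearMap.opNorm_comp_le _ _
      _ ≤ κ * 1 := mul_le_mul (hL _ (hlift p hp)) hι₁ (norm_nonneg _) κ.2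
      _ = κ := mul_one _
  have hf : ApproximatesLinearOn φ₁ ((A : E →L[ℝ] F).comp ι) (ball (z₀.1, z₀.2.1) r) κ :=
    (convex_ball _ _).approximatesLinearOn
      (fun p hp => (hd _ (hlift p hp)).hasFDerivAt.hasFDerivWithinAt) hderiv
  have hAι : AntilipschitzWith ‖(A.symm : F →L[ℝ] E)‖₊ ((A : E →L[ℝ] F).comp ι) :=
    (one_mul ‖(A.symm : F →L[ℝ] E)‖₊) ▸
      A.antilipschitz.comp (AddMonoidHomClass.isometry_of_norm ι hι).antilipschitz
  refine (hf.injOn_of_antilipschitz hAι hκ).mono ?_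
  rintro _ ⟨z, hz, rfl⟩
  rw [mem_ball, Prod.dist_eq] at hz ⊢
  exact lt_of_le_of_lt (max_le_max le_rfl (le_max_left _ _)) hz

lemma exists_radius_rescaledFDeriv {U : Set E} {z₀ : E} (hU : U ∈ 𝓝 z₀)
    (hφ₁ : ContDiffAt ℝ 1 φ₁ (z₀.1, z₀.2.1)) (hφ₂ : ContDiffAt ℝ 1 φ₂ (z₀.1, z₀.2.2))
    [FiniteDimensional ℝ F] (e : E ≃L[ℝ] F) {κ δ : ℝ} (hκ : 0 < κ)
    (hδ : δ < |((rescaledFDeriv φ₁ φ₂ 0 z₀).comp (e.symm : F →L[ℝ] E)).det|) :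
    ∃ r > 0, ∀ t z, |t| ≤ r → z ∈ closedBall z₀ r →
      z ∈ U ∧ (DifferentiableAt ℝ φ₁ (z.1, z.2.1) ∧ DifferentiableAt ℝ φ₂ (z.1, z.2.2)) ∧
      ‖rescaledFDeriv φ₁ φ₂ t z - rescaledFDeriv φ₁ φ₂ 0 z₀‖ ≤ κ ∧
      δ ≤ |((rescaledFDeriv φ₁ φ₂ t z).comp (e.symm : F →L[ℝ] E)).det| := by
  apply exists_pos_forall_abs_le_of_eventually
  have hL := continuousAt_rescaledFDeriv (t := 0) (hφ₁.continuousAt_fderiv one_ne_zero)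
    (hφ₂.continuousAt_fderiv one_ne_zero)
  have hdet : ContinuousAt
      (fun p : ℝ × E => |((rescaledFDeriv φ₁ φ₂ p.1 p.2).comp (e.symm : F →L[ℝ] E)).det|)
      (0, z₀) :=
    (continuous_abs.comp ContinuousLinearMap.continuous_det).continuousAt.comp
      (hL.clm_comp continuousAt_const)
  have hπ₁ : Tendsto (fun p : ℝ × E => (p.2.1, p.2.2.1)) (𝓝 (0, z₀)) (𝓝 (z₀.1, z₀.2.1)) :=
    (by fun_prop : Continuous fun p : ℝ × E => (p.2.1, p.2.2.1)).tendsto _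
  have hπ₂ : Tendsto (fun p : ℝ × E => (p.2.1, p.2.2.2)) (𝓝 (0, z₀)) (𝓝 (z₀.1, z₀.2.2)) :=
    (by fun_prop : Continuous fun p : ℝ × E => (p.2.1, p.2.2.2)).tendsto _
  filter_upwards [continuous_snd.tendsto (0, z₀) hU,
    hπ₁.eventually (hφ₁.eventually (by simp)), hπ₂.eventually (hφ₂.eventually (by simp)),
    hL.eventually (ball_mem_nhds _ hκ), hdet.eventually (lt_mem_nhds hδ)]
    with p hpU hp₁ hp₂ hpκ hpδ
  exact ⟨hpU, ⟨hp₁.differentiableAt one_ne_zero, hp₂.differentiableAt one_ne_zero⟩,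
    (mem_ball_iff_norm.1 hpκ).le, hpδ.le⟩

theorem exists_nhds_psi_injOn_isOpenMap_volume [FiniteDimensional ℝ E₀] [FiniteDimensional ℝ E₁]
    [FiniteDimensional ℝ E₂] [Nontrivial E₀] [MeasurableSpace F] [BorelSpace F] (μ : Measure F)
    [μ.IsAddHaarMeasure] {U : Set E} (hU : IsOpen U) {z₀ : E} (hz₀ : z₀ ∈ U)
    (hφ₁ : ContDiffAt ℝ 1 φ₁ (z₀.1, z₀.2.1)) (hφ₂ : ContDiffAt ℝ 1 φ₂ (z₀.1, z₀.2.2))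
    (e : E ≃L[ℝ] F) (hdet : ((rescaledFDeriv φ₁ φ₂ 0 z₀).comp (e.symm : F →L[ℝ] E)).det ≠ 0) :
    ∃ (U' U'' : Set E) (c : ℝ), 0 < c ∧ c ≤ 1 ∧ z₀ ∈ U'' ∧ U'' ⊆ U' ∧ U' ⊆ U ∧
      IsOpen U' ∧ IsOpen U'' ∧ Bornology.IsBounded U' ∧ Bornology.IsBounded U'' ∧
      InjOn φ₁ ((fun z : E => (z.1, z.2.1)) '' U') ∧
      ∀ N : ℝ, c⁻¹ ≤ N →
        InjOn (psi φ₁ φ₂ N) U' ∧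
        (∀ V ⊆ U', IsOpen V → IsOpen (psi φ₁ φ₂ N '' V)) ∧
        ENNReal.ofReal (c * N ^ (Module.finrank ℝ E₀ + Module.finrank ℝ E₁))
          ≤ μ (psi φ₁ φ₂ N '' U'') ∧
        ∀ z ∈ U'', ball (psi φ₁ φ₂ N z) c ⊆ psi φ₁ φ₂ N '' U' := by
  have : FiniteDimensional ℝ F := e.toLinearEquiv.finiteDimensional
  set L := rescaledFDeriv φ₁ φ₂
  set A : E ≃L[ℝ] F :=
    e.trans (((L 0 z₀).comp (e.symm : F →L[ℝ] E)).toContinuousLinearEquivOfDetNeZero hdet)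
  have hA : (A : E →L[ℝ] F) = L 0 z₀ := ContinuousLinearMap.ext fun u => by simp [A]
  set κ : ℝ≥0 := ‖(A.symm : F →L[ℝ] E)‖₊⁻¹ / 2
  have hA' : 0 < ‖(A.symm : F →L[ℝ] E)‖₊⁻¹ := inv_pos.2 A.nnnorm_symm_pos
  have hκ : 0 < κ := half_pos hA'
  have hκA : κ < ‖(A.symm : F →L[ℝ] E)‖₊⁻¹ := NNReal.half_lt_self hA'.ne'
  set d := |((L 0 z₀).comp (e.symm : F →L[ℝ] E)).det|
  obtain ⟨r, hr, H⟩ := exists_radius_rescaledFDeriv (hU.mem_nhds hz₀) hφ₁ hφ₂ e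
    (NNReal.coe_pos.2 hκ) (half_lt_self (abs_pos.2 hdet))
  have hr₀ : |(0 : ℝ)| ≤ r := by simpa using hr.le
  have hd := fun z hz => (H 0 z hr₀ hz).2.1
  have hL : ∀ t z, |t| ≤ r → z ∈ closedBall z₀ r → ‖L t z - A‖ ≤ κ := fun t z ht hz => by
    rw [hA]; exact (H t z ht hz).2.2.1
  set v := (μ (e '' ball z₀ (r / 2))).toReal
  have hv : 0 < v := ENNReal.toReal_pos ((e.toHomeomorph.isOpenMap _ isOpen_ball).measure_ne_zero
    μ ((nonempty_ball.2 (by positivity)).image _))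
    (e.lipschitz.isBounded_image isBounded_ball).measure_lt_top.ne
  -- `c ≤ r` forces `N⁻¹ ≤ r`; `κ * (r / 2)` is the radius in (iv), `d / 2 * v` the factor in (iii)
  set c := min (min 1 r) (min (κ * (r / 2)) (d / 2 * v))
  have hc : 0 < c := by positivity
  refine ⟨ball z₀ r, ball z₀ (r / 2), c, hc, (min_le_left _ _).trans (min_le_left _ _),
    mem_ball_self (by positivity), ball_subset_ball (by linarith),
    ball_subset_closedBall.trans fun z hz => (H 0 z hr₀ hz).1, isOpen_ball, isOpen_ball,
    isBounded_ball, isBounded_ball,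
    injOn_image_fst (fun z hz => (hd z hz).1) (fun z => hL 0 z hr₀) hκA, fun N hN => ?_⟩
  have hN₁ : 1 ≤ N :=
    (one_le_inv₀ hc).2 ((min_le_left _ _).trans (min_le_left _ _)) |>.trans hN
  have hN₀ : 0 < N := one_pos.trans_le hN₁
  obtain ⟨a, rfl⟩ : ∃ a : ℝˣ, (a : ℝ) = N := ⟨Units.mk0 N hN₀.ne', rfl⟩
  have ha : |(a : ℝ)⁻¹| ≤ r := by
    rw [abs_inv, abs_of_pos hN₀]
    exact (inv_le_of_inv_le₀ hc hN).trans ((min_le_left _ _).trans (min_le_right _ _))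
  obtain ⟨hinj, hopen, hball⟩ := injOn_isOpen_image_ball_subset_image_psi hd hL hκA
    (by simp [κ, mul_div_cancel₀]) hN₁ ha
  refine ⟨hinj, hopen, ?_, fun z hz =>
    (ball_subset_ball ((min_le_right _ _).trans (min_le_left _ _))).trans (hball z hz)⟩
  have hsub : ball z₀ (r / 2) ⊆ closedBall z₀ r :=
    (ball_subset_ball (by linarith)).trans ball_subset_closedBall
  exact ofReal_mul_pow_le_addHaar_image_psi μ e hN₀ isOpen_ball isBounded_ball
    (fun z hz => hd z (hsub hz)) (fun z hz => (H _ z ha (hsub hz)).2.2.2)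
    (hinj.mono (ball_subset_ball (by linarith))) ((min_le_right _ _).trans (min_le_right _ _))

end Psi

section Coordinates

def jacobianIndexEquiv (m₁ m₂ : ℕ) : (Fin 2 ⊕ Fin m₁) ⊕ Fin m₂ ≃ Fin (2 + m₁ + m₂) :=
  (Equiv.sumCongr finSumFinEquiv (Equiv.refl (Fin m₂))).trans finSumFinEquiv

def coordEquiv (m₁ m₂ : ℕ) :
    ((Fin 2 → ℝ) × (Fin m₁ → ℝ) × (Fin m₂ → ℝ)) ≃L[ℝ] (Fin (2 + m₁ + m₂) → ℝ) :=
  LinearEquiv.toContinuousLinearEquiv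
  { toFun := fun z j => Sum.elim (Sum.elim z.1 z.2.1) z.2.2 ((jacobianIndexEquiv m₁ m₂).symm j)
    invFun := fun g => (fun a => g (jacobianIndexEquiv m₁ m₂ (.inl (.inl a))),
      fun b => g (jacobianIndexEquiv m₁ m₂ (.inl (.inr b))),
      fun c => g (jacobianIndexEquiv m₁ m₂ (.inr c)))
    map_add' := fun z w => by
      funext j
      rcases h : (jacobianIndexEquiv m₁ m₂).symm j with (a | b) | c <;> simp [h]
    map_smul' := fun t z => by
      funext j
      rcases h : (jacobianIndexEquiv m₁ m₂).symm j with (a | b) | c <;> simp [h]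
    left_inv := fun z => by simp
    right_inv := fun g => by
      funext j
      obtain ⟨p, rfl⟩ := (jacobianIndexEquiv m₁ m₂).surjective j
      rcases p with (a | b) | c <;> simp }

lemma coordEquiv_symm_single {m₁ m₂ : ℕ} (p : (Fin 2 ⊕ Fin m₁) ⊕ Fin m₂) :
    (coordEquiv m₁ m₂).symm (Pi.single (jacobianIndexEquiv m₁ m₂ p) 1)
      = Sum.elim (Sum.elim (fun a => (Pi.single a 1, 0, 0)) (fun b => (0, Pi.single b 1, 0)))
          (fun c => (0, 0, Pi.single c 1)) p := by
  rcases p with (a | b) | c <;>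
    refine Prod.ext (funext fun _ => ?_) (Prod.ext (funext fun _ => ?_) (funext fun _ => ?_)) <;>
    simp [coordEquiv, Pi.single_apply]

lemma det_rescaledFDeriv_comp_coordEquiv_symm {m₁ m₂ : ℕ}
    (φ₁ : (Fin 2 → ℝ) × (Fin m₁ → ℝ) → (Fin (2 + m₁ + m₂) → ℝ))
    (φ₂ : (Fin 2 → ℝ) × (Fin m₂ → ℝ) → (Fin (2 + m₁ + m₂) → ℝ))
    (z : (Fin 2 → ℝ) × (Fin m₁ → ℝ) × (Fin m₂ → ℝ)) :
    ((rescaledFDeriv φ₁ φ₂ 0 z).comp ((coordEquiv m₁ m₂).symm : _ →L[ℝ] _)).det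
      = (jacobianMatrix m₁ m₂ φ₁ φ₂ z).det := by
  rw [ContinuousLinearMap.det, ← LinearMap.det_toMatrix']
  congr 1
  ext i j
  obtain ⟨p, rfl⟩ := (jacobianIndexEquiv m₁ m₂).surjective j
  have hM : jacobianMatrix m₁ m₂ φ₁ φ₂ z i (jacobianIndexEquiv m₁ m₂ p)
      = Sum.elim (Sum.elim
          (fun a : Fin 2 => fderiv ℝ φ₁ (z.1, z.2.1) (Pi.single a 1, 0) i)
          (fun b : Fin m₁ => fderiv ℝ φ₁ (z.1, z.2.1) (0, Pi.single b 1) i))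
        (fun c : Fin m₂ => - fderiv ℝ φ₂ (z.1, z.2.2) (0, Pi.single c 1) i) p :=
    congrArg (Sum.elim _ _) ((jacobianIndexEquiv m₁ m₂).symm_apply_apply p)
  rw [LinearMap.toMatrix'_apply, hM, ContinuousLinearMap.coe_coe,
    ContinuousLinearMap.comp_apply, ContinuousLinearEquiv.coe_coe, coordEquiv_symm_single]
  rcases p with (a | b) | c <;> simp [rescaledFDeriv, Prod.mk_zero_zero]

end Coordinates

end

theorem volume_and_injectivity_of_psi_general
    (m₁ m₂ : ℕ)
    (U₀ : Set (Fin 2 → ℝ)) (U₁ : Set (Fin m₁ → ℝ)) (U₂ : Set (Fin m₂ → ℝ))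
    (hU₀o : IsOpen U₀) (hU₁o : IsOpen U₁) (hU₂o : IsOpen U₂)
    (φ₁ : (Fin 2 → ℝ) × (Fin m₁ → ℝ) → (Fin (2 + m₁ + m₂) → ℝ))
    (φ₂ : (Fin 2 → ℝ) × (Fin m₂ → ℝ) → (Fin (2 + m₁ + m₂) → ℝ))
    (hφ₁ : ContDiffOn ℝ 1 φ₁ (U₀ ×ˢ U₁))
    (hφ₂ : ContDiffOn ℝ 1 φ₂ (U₀ ×ˢ U₂))
    (ψ : ℝ → (Fin 2 → ℝ) × (Fin m₁ → ℝ) × (Fin m₂ → ℝ) → (Fin (2 + m₁ + m₂) → ℝ))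
    (hψ : ∀ N z, ψ N z = N • φ₁ (z.1, z.2.1) - φ₂ (z.1, z.2.2))
    (z₀ : (Fin 2 → ℝ) × (Fin m₁ → ℝ) × (Fin m₂ → ℝ))
    (hz₀ : z₀ ∈ U₀ ×ˢ U₁ ×ˢ U₂)
    (hδ₀ : (jacobianMatrix m₁ m₂ φ₁ φ₂ z₀).det ≠ 0) :
    ∃ (U' U'' : Set ((Fin 2 → ℝ) × (Fin m₁ → ℝ) × (Fin m₂ → ℝ))) (c : ℝ),
      0 < c ∧ c ≤ 1 ∧
      z₀ ∈ U'' ∧ U'' ⊆ U' ∧ U' ⊆ U₀ ×ˢ U₁ ×ˢ U₂ ∧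
      IsOpen U' ∧ IsOpen U'' ∧
      Bornology.IsBounded U' ∧ Bornology.IsBounded U'' ∧
      Set.InjOn φ₁ ((fun z : (Fin 2 → ℝ) × (Fin m₁ → ℝ) × (Fin m₂ → ℝ) =>
        (z.1, z.2.1)) '' U') ∧
      ∀ N : ℝ, c⁻¹ ≤ N →
        Set.InjOn (ψ N) U' ∧
        (∀ V ⊆ U', IsOpen V → IsOpen (ψ N '' V)) ∧
        ENNReal.ofReal (c * N ^ (2 + m₁)) ≤ volume (ψ N '' U'') ∧
        ∀ z ∈ U'', Metric.ball (ψ N z) c ⊆ ψ N '' U' := by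
  obtain rfl : ψ = psi φ₁ φ₂ := funext fun N => funext (hψ N)
  have hdet : ((rescaledFDeriv φ₁ φ₂ 0 z₀).comp
      ((coordEquiv m₁ m₂).symm : (Fin (2 + m₁ + m₂) → ℝ) →L[ℝ] _)).det ≠ 0 := by
    rwa [det_rescaledFDeriv_comp_coordEquiv_symm]
  have h := exists_nhds_psi_injOn_isOpenMap_volume volume (hU₀o.prod (hU₁o.prod hU₂o)) hz₀
    (hφ₁.contDiffAt ((hU₀o.prod hU₁o).mem_nhds ⟨hz₀.1, hz₀.2.1⟩))
    (hφ₂.contDiffAt ((hU₀o.prod hU₂o).mem_nhds ⟨hz₀.1, hz₀.2.2⟩)) (coordEquiv m₁ m₂) hdet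
  simp only [Module.finrank_fin_fun] at h
  exact h

/-- Suppose `z₀ ∈ U = U₀ × U₁ × U₂` satisfies `δ₀(z₀) ≠ 0`.  Then there
exist bounded open neighborhoods `U'' ⊆ U'` of `z₀` in `U` and a constant `c ∈ (0, 1]`
such that: (i) `φ₁` is injective on `π₁(U')`; and for all real `N ≥ c⁻¹`:
(ii) `ψ_N` restricted to `U'` is injective and open; (iii) `vol (ψ_N(U'')) ≥ c·N^{2+m₁}`;
(iv) `B_c(ψ_N(U'')) ⊆ ψ_N(U')`. -/
theorem volume_and_injectivity_of_psi
    (m₁ m₂ : ℕ)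
    (U₀ : Set (Fin 2 → ℝ)) (U₁ : Set (Fin m₁ → ℝ)) (U₂ : Set (Fin m₂ → ℝ))
    (hU₀o : IsOpen U₀) (hU₁o : IsOpen U₁) (hU₂o : IsOpen U₂)
    (hU₀n : U₀.Nonempty) (hU₁n : U₁.Nonempty) (hU₂n : U₂.Nonempty)
    (φ₁ : (Fin 2 → ℝ) × (Fin m₁ → ℝ) → (Fin (2 + m₁ + m₂) → ℝ))
    (φ₂ : (Fin 2 → ℝ) × (Fin m₂ → ℝ) → (Fin (2 + m₁ + m₂) → ℝ))
    (hφ₁ : ContDiffOn ℝ 1 φ₁ (U₀ ×ˢ U₁))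
    (hφ₂ : ContDiffOn ℝ 1 φ₂ (U₀ ×ˢ U₂))
    (hφ₁C1 : ∃ B : ℝ, ∀ z ∈ U₀ ×ˢ U₁, ‖φ₁ z‖ ≤ B ∧ ‖fderiv ℝ φ₁ z‖ ≤ B)
    (hφ₂C1 : ∃ B : ℝ, ∀ z ∈ U₀ ×ˢ U₂, ‖φ₂ z‖ ≤ B ∧ ‖fderiv ℝ φ₂ z‖ ≤ B)
    (ψ : ℝ → (Fin 2 → ℝ) × (Fin m₁ → ℝ) × (Fin m₂ → ℝ) → (Fin (2 + m₁ + m₂) → ℝ))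
    (hψ : ∀ N z, ψ N z = N • φ₁ (z.1, z.2.1) - φ₂ (z.1, z.2.2))
    (z₀ : (Fin 2 → ℝ) × (Fin m₁ → ℝ) × (Fin m₂ → ℝ))
    (hz₀ : z₀ ∈ U₀ ×ˢ U₁ ×ˢ U₂)
    (hδ₀ : (jacobianMatrix m₁ m₂ φ₁ φ₂ z₀).det ≠ 0) :
    ∃ (U' U'' : Set ((Fin 2 → ℝ) × (Fin m₁ → ℝ) × (Fin m₂ → ℝ))) (c : ℝ),
      0 < c ∧ c ≤ 1 ∧
      z₀ ∈ U'' ∧ U'' ⊆ U' ∧ U' ⊆ U₀ ×ˢ U₁ ×ˢ U₂ ∧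
      IsOpen U' ∧ IsOpen U'' ∧
      Bornology.IsBounded U' ∧ Bornology.IsBounded U'' ∧
      Set.InjOn φ₁ ((fun z : (Fin 2 → ℝ) × (Fin m₁ → ℝ) × (Fin m₂ → ℝ) =>
        (z.1, z.2.1)) '' U') ∧
      ∀ N : ℝ, c⁻¹ ≤ N →
        Set.InjOn (ψ N) U' ∧
        (∀ V ⊆ U', IsOpen V → IsOpen (ψ N '' V)) ∧
        ENNReal.ofReal (c * N ^ (2 + m₁)) ≤ volume (ψ N '' U'') ∧
        ∀ z ∈ U'', Metric.ball (ψ N z) c ⊆ ψ N '' U' :=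
  volume_and_injectivity_of_psi_general m₁ m₂ U₀ U₁ U₂ hU₀o hU₁o hU₂o φ₁ φ₂ hφ₁ hφ₂ ψ hψ z₀ hz₀ hδ₀
end

section
/- Let m ≥ 1 be an integer, c₁ > 0 a real number, S ⊆ ℝ^m a bounded open set, and W ⊆ ℝ^m a set such that for every s ∈ S the open ball B_{c₁}(s) is contained in W. Then for every integer N₀ ≥ 1/c₁, the set W ∩ N₀⁻¹ℤ^m has at least vol(S) elements; that is, its cardinality (possibly infinite) is at least the Lebesgue measure of S. -/
open MeasureTheory Module Set
open scoped ENNReal Pointwise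

/-! The translates of the cube `[0, 1/N₀)^m` by the lattice `N₀⁻¹ℤ^m` tile `ℝ^m`. Cutting `S` along
this tiling and moving the pieces back into the cube writes `vol S` as a sum over lattice points `g`
of `vol ((g + S) ∩ cube)`, each term at most `vol cube ≤ 1`. A nonzero term gives `s ∈ S` with
`g + s` in the cube, so `-g` lies within `1/N₀ ≤ c₁` of `s`, hence in `W ∩ N₀⁻¹ℤ^m`. -/

namespace MeasureTheory.IsAddFundamentalDomain

variable {G α : Type*} [AddGroup G] [Countable G] [AddAction G α] [MeasurableSpace α]
  [MeasurableConstVAdd G α] {μ : Measure α} [VAddInvariantMeasure G α μ]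
  {D : Set α}

theorem measure_le_encard_mul_measure (hD : IsAddFundamentalDomain G D μ) (t : Set α) :
    μ t ≤ {g : G | ((g +ᵥ t) ∩ D).Nonempty}.encard * μ D := by
  have hsupport : Function.support (fun g : G => μ ((g +ᵥ t) ∩ D)) ⊆
      {g : G | ((g +ᵥ t) ∩ D).Nonempty} :=
    fun g hg => nonempty_of_measure_ne_zero hg
  calc μ t = ∑' g : G, μ ((g +ᵥ t) ∩ D) := hD.measure_eq_tsum t
    _ = ∑' g : {g : G | ((g +ᵥ t) ∩ D).Nonempty}, μ (((g : G) +ᵥ t) ∩ D) :=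
      (tsum_subtype_eq_of_support_subset hsupport).symm
    _ ≤ ∑' _ : {g : G | ((g +ᵥ t) ∩ D).Nonempty}, μ D :=
      ENNReal.tsum_le_tsum fun _ => measure_mono inter_subset_right
    _ = _ := ENNReal.tsum_set_const _ _

end MeasureTheory.IsAddFundamentalDomain

section CubeLattice

variable (ι : Type*) [Fintype ι] {r : ℝ}

noncomputable def cubeLatticeBasis (hr : r ≠ 0) : Basis ι ℝ (ι → ℝ) :=
  (Pi.basisFun ℝ ι).isUnitSMul fun _ => hr.isUnit

variable {ι}

theorem cubeLatticeBasis_repr_apply (hr : r ≠ 0) (x : ι → ℝ) (i : ι) :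
    (cubeLatticeBasis ι hr).repr x i = r⁻¹ * x i := by
  rw [cubeLatticeBasis, Basis.repr_isUnitSMul, Units.smul_def, Units.val_inv_eq_inv_val,
    IsUnit.unit_spec, Pi.basisFun_repr, smul_eq_mul]

theorem mem_span_cubeLatticeBasis_iff (hr : r ≠ 0) (x : ι → ℝ) :
    x ∈ Submodule.span ℤ (range (cubeLatticeBasis ι hr)) ↔ ∀ i, ∃ a : ℤ, x i = a * r := by
  simp only [Basis.mem_span_iff_repr_mem, cubeLatticeBasis_repr_apply, mem_range, algebraMap_int_eq,
    eq_intCast]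
  refine forall_congr' fun i => exists_congr fun a => ?_
  constructor <;> intro h <;> field_simp at h ⊢ <;> linarith

theorem fundamentalDomain_cubeLatticeBasis (hr : 0 < r) :
    ZSpan.fundamentalDomain (cubeLatticeBasis ι hr.ne') = univ.pi fun _ => Ico 0 r := by
  ext x
  simp only [ZSpan.mem_fundamentalDomain, cubeLatticeBasis_repr_apply, mem_pi, mem_univ,
    true_implies, mem_Ico]
  refine forall_congr' fun i => ?_
  rw [le_inv_mul_iff₀ hr, mul_zero, inv_mul_lt_one₀ hr]

theorem pi_norm_lt_of_mem_pi_Ico (hr : 0 < r) {x : ι → ℝ} (hx : x ∈ univ.pi fun _ => Ico 0 r) :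
    ‖x‖ < r := by
  refine (pi_norm_lt_iff hr).2 fun i => ?_
  obtain ⟨hx0, hxr⟩ := hx i (mem_univ i)
  rwa [Real.norm_of_nonneg hx0]

theorem volume_le_encard_inter_cubeLattice (hr : 0 < r) (hr1 : r ≤ 1) {c : ℝ} (hrc : r ≤ c)
    {S W : Set (ι → ℝ)} (hSW : ∀ s ∈ S, Metric.ball s c ⊆ W) :
    volume S ≤ (W ∩ {v | ∀ i, ∃ a : ℤ, v i = a * r}).encard := by
  let L := (Submodule.span ℤ (range (cubeLatticeBasis ι hr.ne'))).toAddSubgroup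
  have : Countable L := inferInstanceAs (Countable (Submodule.span ℤ _))
  set D := ZSpan.fundamentalDomain (cubeLatticeBasis ι hr.ne') with hD_eq
  have hD : IsAddFundamentalDomain L D volume := ZSpan.isAddFundamentalDomain' _ volume
  have hvol : volume D ≤ 1 := by
    rw [hD_eq, fundamentalDomain_cubeLatticeBasis hr, Real.volume_pi_Ico]
    simp only [sub_zero, Finset.prod_const]
    exact pow_le_one' (ENNReal.ofReal_le_one.2 hr1) _
  have hmaps : MapsTo (fun g : L => -(g : ι → ℝ)) {g | ((g +ᵥ S) ∩ D).Nonempty}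
      (W ∩ {v | ∀ i, ∃ a : ℤ, v i = a * r}) := by
    rintro g ⟨_, ⟨s, hs, rfl⟩, hgs⟩
    rw [hD_eq, fundamentalDomain_cubeLatticeBasis hr] at hgs
    refine ⟨hSW s hs ?_, fun i => ?_⟩
    · have hgs_norm : ‖(g : ι → ℝ) + s‖ < r := pi_norm_lt_of_mem_pi_Ico hr hgs
      rw [Metric.mem_ball, dist_eq_norm, ← norm_neg, neg_sub, sub_neg_eq_add, add_comm]
      exact hgs_norm.trans_le hrc
    · obtain ⟨a, ha⟩ := (mem_span_cubeLatticeBasis_iff hr.ne' _).1 g.2 i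
      exact ⟨-a, by simp [ha]⟩
  calc volume S ≤ {g : L | ((g +ᵥ S) ∩ D).Nonempty}.encard * volume D :=
        hD.measure_le_encard_mul_measure S
    _ ≤ {g : L | ((g +ᵥ S) ∩ D).Nonempty}.encard := mul_le_of_le_one_right' hvol
    _ ≤ _ := by
      exact_mod_cast encard_le_encard_of_injOn hmaps
        (neg_injective.comp Subtype.val_injective).injOn

end CubeLattice

theorem card_inter_rational_lattice_ge_volume_general
    (m : ℕ) (c₁ : ℝ) (hc₁ : 0 < c₁)
    (S : Set (Fin m → ℝ))
    (W : Set (Fin m → ℝ)) (hSW : ∀ s ∈ S, Metric.ball s c₁ ⊆ W) :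
    ∀ N₀ : ℕ, 1 / c₁ ≤ (N₀ : ℝ) →
      volume S ≤
        ((W ∩ {v : Fin m → ℝ | ∀ i, ∃ a : ℤ, v i = (a : ℝ) / N₀}).encard : ℝ≥0∞) := by
  intro N₀ hN₀
  have hN₀_pos : (0 : ℝ) < N₀ := (one_div_pos.2 hc₁).trans_le hN₀
  have hN₀_inv_le_c₁ : (N₀ : ℝ)⁻¹ ≤ c₁ := by simpa using (one_div_le hc₁ hN₀_pos).1 hN₀
  have hN₀_inv_le_one : (N₀ : ℝ)⁻¹ ≤ 1 :=
    inv_le_one_of_one_le₀ (Nat.one_le_cast.2 (by exact_mod_cast hN₀_pos))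
  simpa only [div_eq_mul_inv] using
    volume_le_encard_inter_cubeLattice (inv_pos.2 hN₀_pos) hN₀_inv_le_one hN₀_inv_le_c₁ hSW

/-- (Blichfeldt with a translation of controlled denominator.)
Let `m ≥ 1`, `c₁ > 0`, `S ⊆ ℝ^m` bounded and open, and `W ⊆ ℝ^m` such that for every
`s ∈ S` the open ball (maximum norm) of radius `c₁` around `s` is contained in `W`.
Then for every integer `N₀ ≥ 1/c₁` the set `W ∩ N₀⁻¹ℤ^m` has at least `vol S` elements. -/
theorem card_inter_rational_lattice_ge_volume
    (m : ℕ) (hm : 1 ≤ m) (c₁ : ℝ) (hc₁ : 0 < c₁)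
    (S : Set (Fin m → ℝ)) (hSo : IsOpen S) (hSb : Bornology.IsBounded S)
    (W : Set (Fin m → ℝ)) (hSW : ∀ s ∈ S, Metric.ball s c₁ ⊆ W) :
    ∀ N₀ : ℕ, 1 / c₁ ≤ (N₀ : ℝ) →
      volume S ≤
        ((W ∩ {v : Fin m → ℝ | ∀ i, ∃ a : ℤ, v i = (a : ℝ) / N₀}).encard : ℝ≥0∞) :=
  card_inter_rational_lattice_ge_volume_general m c₁ hc₁ S W hSW
end

section
/- Let T be a ℂ-vector space of finite dimension g and let W be a ℂ-vector subspace of T with dim_ℂ W = m. Let V₀ be an ℝ-vector subspace of T_ℝ of real dimension 2m + 2k that contains W. Then there exists a ℂ-vector subspace V of T with dim_ℂ V = g − (m + k) such that V ∩ V₀ = 0. -/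
/-!
Any real subspace `V₀` of `T` meets some complex subspace of complex codimension
`⌈dim_ℝ V₀ / 2⌉` only in `0`. Induct on `dim_ℂ T`, cutting down by a complex line `L` and
passing to `T ⧸ L`. If some nonzero `v ∈ V₀` has `I • v ∈ V₀`, or `dim_ℝ V₀` is odd, take
`L = ℂ v`: the image of `V₀` loses enough real dimension that `⌈dim_ℝ V₀ / 2⌉` drops by one, and
a complement of `L` inside the preimage of the subspace found in `T ⧸ L` works. Otherwise `V₀`
is totally real of even dimension `≥ 2`, and for independent `v, w ∈ V₀` the line `ℂ (v + I w)`
meets `V₀` only in `0`; then `V₀` embeds in `T ⧸ L` and the full preimage works.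
-/

open Module Complex

theorem Complex.smul_eq_re_smul_add_im_smul_I_smul {T : Type*} [AddCommGroup T] [Module ℂ T]
    (a : ℂ) (x : T) : a • x = a.re • x + a.im • (I • x) := by
  rw [← coe_smul, ← coe_smul, smul_smul, ← add_smul, re_add_im]

theorem Complex.smul_add_I_smul {T : Type*} [AddCommGroup T] [Module ℂ T] (a : ℂ) (v w : T) :
    a • (v + I • w) = (a.re • v - a.im • w) + I • (a.im • v + a.re • w) := by
  conv_lhs => rw [← re_add_im a]
  match_scalars <;> simp [Complex.ext_iff]

namespace Submodule

section DivisionRing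

variable {K M N : Type*} [DivisionRing K] [AddCommGroup M] [Module K M] [AddCommGroup N]
  [Module K N] [FiniteDimensional K M]

theorem finrank_map_add_finrank_ker_inf (f : M →ₗ[K] N) (p : Submodule K M) :
    finrank K (p.map f) + finrank K (LinearMap.ker f ⊓ p : Submodule K M) = finrank K p := by
  have hker : LinearMap.ker (f.domRestrict p) = (LinearMap.ker f ⊓ p).comap p.subtype := by
    rw [LinearMap.ker_domRestrict, comap_inf, comap_subtype_self, inf_top_eq]
  rw [← LinearMap.range_domRestrict, ← (comapSubtypeEquivOfLe inf_le_right).finrank_eq, ← hker]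
  exact LinearMap.finrank_range_add_finrank_ker _

theorem finrank_comap_mkQ (L : Submodule K M) (V' : Submodule K (M ⧸ L)) :
    finrank K (V'.comap L.mkQ) = finrank K V' + finrank K L := by
  have := finrank_map_add_finrank_ker_inf L.mkQ (V'.comap L.mkQ)
  rwa [map_comap_eq_of_surjective L.mkQ_surjective, ker_mkQ,
    inf_of_le_left (le_comap_mkQ L V'), eq_comm] at this

theorem finrank_quotient_span_singleton_add_one {v : M} (hv : v ≠ 0) :
    finrank K (M ⧸ K ∙ v) + 1 = finrank K M := by
  rw [← finrank_span_singleton (K := K) hv, finrank_quotient_add_finrank]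

theorem exists_le_disjoint_finrank_add_eq {L P : Submodule K M} (hLP : L ≤ P) :
    ∃ X ≤ P, Disjoint X L ∧ finrank K X + finrank K L = finrank K P := by
  obtain ⟨C, hC⟩ := L.exists_isCompl
  have hdisj : Disjoint (C ⊓ P) L := hC.symm.disjoint.mono_left inf_le_left
  refine ⟨C ⊓ P, inf_le_right, hdisj, ?_⟩
  have hsup : L ⊔ C ⊓ P = P := by rw [← sup_inf_assoc_of_le C hLP, hC.sup_eq_top, top_inf_eq]
  have := finrank_sup_add_finrank_inf_eq (C ⊓ P) L
  rwa [sup_comm, hsup, hdisj.eq_bot, finrank_bot, add_zero, eq_comm] at this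

end DivisionRing

section Complex

variable {T : Type*} [AddCommGroup T] [Module ℂ T]

theorem finrank_real_restrictScalars (L : Submodule ℂ T) :
    finrank ℝ (L.restrictScalars ℝ) = 2 * finrank ℂ L :=
  ((restrictScalarsEquiv ℝ ℂ T L).restrictScalars ℝ).finrank_eq.trans (finrank_real_of_complex L)

theorem span_singleton_restrictScalars_le {V₀ : Submodule ℝ T} {v : T} (hv : v ∈ V₀)
    (hIv : I • v ∈ V₀) : (ℂ ∙ v).restrictScalars ℝ ≤ V₀ := by
  intro x hx
  obtain ⟨a, rfl⟩ := mem_span_singleton.1 hx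
  rw [smul_eq_re_smul_add_im_smul_I_smul]
  exact add_mem (smul_mem _ _ hv) (smul_mem _ _ hIv)

theorem disjoint_span_add_I_smul {V₀ : Submodule ℝ T} (hV₀ : ∀ u ∈ V₀, I • u ∈ V₀ → u = 0)
    {v w : T} (hv : v ∈ V₀) (hw : w ∈ V₀) (hvw : LinearIndependent ℝ ![v, w]) :
    Disjoint ((ℂ ∙ (v + I • w)).restrictScalars ℝ) V₀ := by
  rw [disjoint_def]
  rintro _ hx hxV₀
  obtain ⟨a, rfl⟩ := mem_span_singleton.1 hx
  rw [smul_add_I_smul] at hxV₀ ⊢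
  have hp : a.re • v - a.im • w ∈ V₀ := sub_mem (smul_mem _ _ hv) (smul_mem _ _ hw)
  have hq : a.im • v + a.re • w = 0 :=
    hV₀ _ (add_mem (smul_mem _ _ hv) (smul_mem _ _ hw)) (by simpa using sub_mem hxV₀ hp)
  obtain ⟨him, hre⟩ := LinearIndependent.pair_iff.1 hvw _ _ hq
  simp [him, hre]

theorem exists_ne_zero_disjoint_span_singleton {V₀ : Submodule ℝ T}
    (hV₀ : ∀ u ∈ V₀, I • u ∈ V₀ → u = 0) (hd : 1 < finrank ℝ V₀) :
    ∃ z ≠ 0, Disjoint ((ℂ ∙ z).restrictScalars ℝ) V₀ := by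
  have : Nontrivial V₀ := nontrivial_of_finrank_pos (zero_lt_one.trans hd)
  obtain ⟨⟨v, hv⟩, hv0⟩ := exists_ne (0 : V₀)
  obtain ⟨⟨w, hw⟩, hvw⟩ := exists_linearIndependent_pair_of_one_lt_finrank hd hv0
  have hvw' : LinearIndependent ℝ ![v, w] :=
    LinearIndependent.pair_iff.2 fun s t hst ↦
      LinearIndependent.pair_iff.1 hvw s t (by ext; simpa using hst)
  refine ⟨v + I • w, fun h ↦ hvw'.ne_zero 1 ?_, disjoint_span_add_I_smul hV₀ hv hw hvw'⟩
  simpa using hV₀ w hw (by rw [eq_neg_of_add_eq_zero_right h]; exact neg_mem hv)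

variable {L : Submodule ℂ T} {V₀ : Submodule ℝ T} {V' : Submodule ℂ (T ⧸ L)}

theorem comap_mkQ_restrictScalars_inf_le
    (hV' : Disjoint (V'.restrictScalars ℝ) (V₀.map (L.mkQ.restrictScalars ℝ))) :
    (V'.comap L.mkQ).restrictScalars ℝ ⊓ V₀ ≤ L.restrictScalars ℝ :=
  fun _ hx ↦ (Quotient.mk_eq_zero L).1 (hV'.le_bot ⟨hx.1, mem_map_of_mem hx.2⟩)

theorem disjoint_comap_mkQ_restrictScalars
    (hV' : Disjoint (V'.restrictScalars ℝ) (V₀.map (L.mkQ.restrictScalars ℝ)))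
    (hL : Disjoint (L.restrictScalars ℝ) V₀) :
    Disjoint ((V'.comap L.mkQ).restrictScalars ℝ) V₀ := by
  rw [disjoint_iff_inf_le]
  exact le_inf (comap_mkQ_restrictScalars_inf_le hV') inf_le_right |>.trans hL.le_bot

variable [FiniteDimensional ℂ T]

theorem one_le_finrank_restrictScalars_inf {v : T} (hvL : v ∈ L) (hv : v ∈ V₀) (hv0 : v ≠ 0) :
    1 ≤ finrank ℝ (L.restrictScalars ℝ ⊓ V₀ : Submodule ℝ T) := by
  rw [← finrank_span_singleton (K := ℝ) hv0]
  exact finrank_mono (span_le.2 (by simp [hvL, hv]))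

theorem finrank_map_mkQ_add_finrank_inf :
    finrank ℝ (V₀.map (L.mkQ.restrictScalars ℝ)) +
      finrank ℝ (L.restrictScalars ℝ ⊓ V₀ : Submodule ℝ T) = finrank ℝ V₀ := by
  have := finrank_map_add_finrank_ker_inf (L.mkQ.restrictScalars ℝ) V₀
  rwa [LinearMap.ker_restrictScalars, ker_mkQ] at this

theorem exists_finrank_eq_disjoint_restrictScalars
    (hV' : Disjoint (V'.restrictScalars ℝ) (V₀.map (L.mkQ.restrictScalars ℝ))) :
    ∃ V : Submodule ℂ T, finrank ℂ V = finrank ℂ V' ∧ Disjoint (V.restrictScalars ℝ) V₀ := by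
  obtain ⟨V, hV, hVL, hVdim⟩ := exists_le_disjoint_finrank_add_eq (le_comap_mkQ L V')
  refine ⟨V, by rw [finrank_comap_mkQ] at hVdim; omega, ?_⟩
  rw [disjoint_iff_inf_le]
  calc V.restrictScalars ℝ ⊓ V₀
      ≤ V.restrictScalars ℝ ⊓ L.restrictScalars ℝ :=
        le_inf inf_le_left <| (inf_le_inf_right V₀ (restrictScalars_mono ℝ hV)).trans
          (comap_mkQ_restrictScalars_inf_le hV')
    _ = ⊥ := by rw [← restrictScalars_inf, hVL.eq_bot, restrictScalars_bot]

end Complex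

/-- `(finrank ℝ V₀ + 1) / 2` is `⌈dim_ℝ V₀ / 2⌉`. -/
def HasDisjointComplexSubspace {T : Type*} [AddCommGroup T] [Module ℂ T]
    (V₀ : Submodule ℝ T) : Prop :=
  ∃ V : Submodule ℂ T, finrank ℂ V + (finrank ℝ V₀ + 1) / 2 = finrank ℂ T ∧
    Disjoint (V.restrictScalars ℝ) V₀

namespace HasDisjointComplexSubspace

variable {T : Type*} [AddCommGroup T] [Module ℂ T] [FiniteDimensional ℂ T] {V₀ : Submodule ℝ T}

theorem of_map_mkQ_of_disjoint {L : Submodule ℂ T} (hL : Disjoint (L.restrictScalars ℝ) V₀)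
    (h : HasDisjointComplexSubspace (V₀.map (L.mkQ.restrictScalars ℝ))) :
    HasDisjointComplexSubspace V₀ := by
  obtain ⟨V', hV'dim, hV'⟩ := h
  refine ⟨V'.comap L.mkQ, ?_, disjoint_comap_mkQ_restrictScalars hV' hL⟩
  have hmap := finrank_map_mkQ_add_finrank_inf (L := L) (V₀ := V₀)
  rw [hL.eq_bot, finrank_bot, add_zero] at hmap
  have := L.finrank_quotient_add_finrank
  rw [finrank_comap_mkQ]
  omega

theorem of_map_mkQ_span_singleton {v : T} (hv : v ∈ V₀) (hv0 : v ≠ 0)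
    (hvI : Odd (finrank ℝ V₀) ∨ I • v ∈ V₀)
    (h : HasDisjointComplexSubspace (V₀.map ((ℂ ∙ v).mkQ.restrictScalars ℝ))) :
    HasDisjointComplexSubspace V₀ := by
  obtain ⟨V', hV'dim, hV'⟩ := h
  obtain ⟨V, hVdim, hV⟩ := exists_finrank_eq_disjoint_restrictScalars hV'
  refine ⟨V, ?_, hV⟩
  have hquot := finrank_quotient_span_singleton_add_one (K := ℂ) hv0
  have hmap := finrank_map_mkQ_add_finrank_inf (L := ℂ ∙ v) (V₀ := V₀)
  have hinf_pos := one_le_finrank_restrictScalars_inf (mem_span_singleton_self v) hv hv0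
  have hinf_le := finrank_mono (inf_le_left (a := (ℂ ∙ v).restrictScalars ℝ) (b := V₀))
  rw [finrank_real_restrictScalars, finrank_span_singleton hv0] at hinf_le
  rcases hvI with ⟨d, hd⟩ | hIv
  · omega
  · rw [inf_of_le_left (span_singleton_restrictScalars_le hv hIv), finrank_real_restrictScalars,
      finrank_span_singleton hv0] at hmap
    omega

end HasDisjointComplexSubspace

theorem hasDisjointComplexSubspace {T : Type*} [AddCommGroup T] [Module ℂ T]
    [FiniteDimensional ℂ T] (V₀ : Submodule ℝ T) : HasDisjointComplexSubspace V₀ := by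
  induction hg : finrank ℂ T using Nat.strong_induction_on generalizing T with
  | _ g ih =>
  rcases eq_or_ne V₀ ⊥ with rfl | hV₀
  · exact ⟨⊤, by simp [hg], by simp⟩
  by_cases hline : ∃ v ∈ V₀, v ≠ 0 ∧ (Odd (finrank ℝ V₀) ∨ I • v ∈ V₀)
  · obtain ⟨v, hv, hv0, hvI⟩ := hline
    have := finrank_quotient_span_singleton_add_one (K := ℂ) hv0
    exact .of_map_mkQ_span_singleton hv hv0 hvI (ih _ (by omega) _ rfl)
  · push Not at hline
    have hreal : ∀ u ∈ V₀, I • u ∈ V₀ → u = 0 := fun u hu hIu ↦ by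
      by_contra hu0
      exact (hline u hu hu0).2 hIu
    obtain ⟨v, hv, hv0⟩ := exists_mem_ne_zero_of_ne_bot hV₀
    have hpos : 0 < finrank ℝ V₀ := finrank_pos_iff.2 (nontrivial_iff_ne_bot.2 hV₀)
    have heven := Nat.not_odd_iff_even.1 (hline v hv hv0).1
    obtain ⟨z, hz0, hzV₀⟩ := exists_ne_zero_disjoint_span_singleton hreal
      (by obtain ⟨d, hd⟩ := heven; omega)
    have := finrank_quotient_span_singleton_add_one (K := ℂ) hz0
    exact .of_map_mkQ_of_disjoint hzV₀ (ih _ (by omega) _ rfl)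

end Submodule

theorem exists_complex_complement_of_real_subspace_general
    (T : Type*) [AddCommGroup T] [Module ℂ T] [FiniteDimensional ℂ T]
    (g m k : ℕ) (hT : Module.finrank ℂ T = g)
    (V₀ : Submodule ℝ T) (hV₀ : Module.finrank ℝ V₀ = 2 * m + 2 * k) :
    ∃ V : Submodule ℂ T, Module.finrank ℂ V = g - (m + k) ∧
      V.restrictScalars ℝ ⊓ V₀ = ⊥ := by
  obtain ⟨V, hVdim, hV⟩ := Submodule.hasDisjointComplexSubspace V₀
  exact ⟨V, by omega, disjoint_iff.1 hV⟩

/-- Let `T` be a `ℂ`-vector space of finite dimension `g` and `W` a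
`ℂ`-subspace of `T` with `dim_ℂ W = m`.  Let `V₀` be an `ℝ`-subspace of `T` (viewed as a
real vector space) of real dimension `2m + 2k` containing `W`.  Then there exists a
`ℂ`-subspace `V` of `T` with `dim_ℂ V = g - (m + k)` such that `V ∩ V₀ = 0`. -/
theorem exists_complex_complement_of_real_subspace
    (T : Type*) [AddCommGroup T] [Module ℂ T] [FiniteDimensional ℂ T]
    (g m k : ℕ) (hT : Module.finrank ℂ T = g)
    (W : Submodule ℂ T) (hW : Module.finrank ℂ W = m)
    (V₀ : Submodule ℝ T) (hV₀ : Module.finrank ℝ V₀ = 2 * m + 2 * k)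
    (hWV₀ : W.restrictScalars ℝ ≤ V₀) :
    ∃ V : Submodule ℂ T, Module.finrank ℂ V = g - (m + k) ∧
      V.restrictScalars ℝ ⊓ V₀ = ⊥ :=
  exists_complex_complement_of_real_subspace_general T g m k hT V₀ hV₀
end

section
/- Let k ≥ 0 be an integer, let U be a ℂ-vector space with dim_ℂ U = 2k, and let V₀ be an ℝ-vector subspace of U_ℝ of real dimension 2k such that the ℂ-span of V₀ equals U. Then there exists a ℂ-vector subspace V of U with dim_ℂ V = k such that V ∩ V₀ = 0. -/
/-!
A real basis `x₁, …, x_k, y₁, …, y_k` of `V₀` spans `U` over `ℂ` and has `dim_ℂ U` elements, so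
it is a `ℂ`-basis of `U`, and `V₀` is exactly the set of vectors with real coordinates in it.
Take `V` to be the `ℂ`-span of the `x_j + i y_j`: every vector of `V` has `y_j`-coordinate equal
to `i` times its `x_j`-coordinate, and two real numbers `a, b` with `b = i a` vanish.
-/

open Complex Module Submodule

namespace Module.Basis

section SMulGraph

variable {R U κ : Type*} [CommRing R] [AddCommGroup U] [Module R U]

/-- The graph of `c • ·` from the `inl`-coordinate subspace to the `inr`-coordinate subspace. -/
def smulGraph (e : Basis (κ ⊕ κ) R U) (c : R) : Submodule R U :=
  span R (Set.range fun j => e (.inl j) + c • e (.inr j))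

theorem repr_inr_eq_mul_repr_inl_of_mem_smulGraph (e : Basis (κ ⊕ κ) R U) {c : R} {x : U}
    (hx : x ∈ e.smulGraph c) (j : κ) : e.repr x (.inr j) = c * e.repr x (.inl j) := by
  suffices e.smulGraph c ≤ LinearMap.ker (e.coord (.inr j) - c • e.coord (.inl j)) by
    simpa [sub_eq_zero] using this hx
  refine span_le.2 ?_
  rintro _ ⟨j', rfl⟩
  by_cases h : j' = j <;> simp [h]

theorem finrank_smulGraph [Nontrivial R] [Fintype κ] (e : Basis (κ ⊕ κ) R U) (c : R) :
    finrank R (e.smulGraph c) = Fintype.card κ := by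
  refine finrank_span_eq_card (LinearIndependent.of_comp
    (LinearMap.pi fun j => e.coord (.inl j)) ?_)
  classical
  convert Pi.linearIndependent_single_one κ R using 1
  · ext j j'
    by_cases h : j = j' <;> simp [h]
  · rfl -- `Pi.module` vs `Pi.Function.module` on `κ → R`

end SMulGraph

theorem restrictScalars_smulGraph_I_inf_span_real_eq_bot {U κ : Type*} [AddCommGroup U]
    [Module ℂ U] (e : Basis (κ ⊕ κ) ℂ U) :
    (e.smulGraph I).restrictScalars ℝ ⊓ span ℝ (Set.range e) = ⊥ := by
  refine (Submodule.eq_bot_iff _).2 fun x hx => e.ext_elem fun i => ?_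
  have hrel := e.repr_inr_eq_mul_repr_inl_of_mem_smulGraph (mem_inf.1 hx).1
  have hreal := (e.mem_span_iff_repr_mem ℝ x).1 (mem_inf.1 hx).2
  suffices ∀ j, e.repr x (.inl j) = 0 ∧ e.repr x (.inr j) = 0 by
    rcases i with j | j <;> simp [this j]
  intro j
  obtain ⟨a, ha⟩ := hreal (.inl j)
  obtain ⟨b, hb⟩ := hreal (.inr j)
  have hab : (b : ℂ) = I * a := by simpa [← ha, ← hb] using hrel j
  have hb0 : b = 0 := by simpa using congrArg Complex.re hab
  have ha0 : a = 0 := by simpa using (congrArg Complex.im hab).symm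
  simp [← ha, ← hb, ha0, hb0]

end Module.Basis

theorem Submodule.exists_basis_span_eq_of_span_eq_top {K L U ι : Type*} [Field K] [Field L]
    [Algebra K L] [AddCommGroup U] [Module L U] [Module K U] [IsScalarTower K L U] [Fintype ι]
    {V₀ : Submodule K U} (b : Basis ι K V₀) (hspan : span L (V₀ : Set U) = ⊤)
    (hcard : Fintype.card ι = finrank L U) :
    ∃ e : Basis ι L U, span K (Set.range e) = V₀ := by
  have hb : span K (Set.range fun i => (b i : U)) = V₀ := by
    rw [show (fun i => (b i : U)) = V₀.subtype ∘ b from rfl, Set.range_comp, ← map_span,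
      b.span_eq, map_subtype_top]
  have hle : ⊤ ≤ span L (Set.range fun i => (b i : U)) := by
    have := span_span_of_tower K L (Set.range fun i => (b i : U))
    rw [hb, hspan] at this
    exact this.symm.ge
  exact ⟨basisOfTopLeSpanOfCardEqFinrank _ hle hcard, by simpa using hb⟩

/-- Let `U` be a `ℂ`-vector space with `dim_ℂ U = 2k` and let `V₀` be an
`ℝ`-subspace of `U` (viewed as a real vector space) of real dimension `2k` whose `ℂ`-span
is all of `U`.  Then there exists a `ℂ`-subspace `V` of `U` with `dim_ℂ V = k` such that
`V ∩ V₀ = 0`. -/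
theorem exists_complex_complement_of_totally_real_subspace
    (k : ℕ) (U : Type*) [AddCommGroup U] [Module ℂ U] [FiniteDimensional ℂ U]
    (hU : Module.finrank ℂ U = 2 * k)
    (V₀ : Submodule ℝ U) (hV₀ : Module.finrank ℝ V₀ = 2 * k)
    (hspan : Submodule.span ℂ (V₀ : Set U) = ⊤) :
    ∃ V : Submodule ℂ U, Module.finrank ℂ V = k ∧
      V.restrictScalars ℝ ⊓ V₀ = ⊥ := by
  let b : Basis (Fin k ⊕ Fin k) ℝ V₀ :=
    (finBasisOfFinrankEq ℝ V₀ hV₀).reindex ((finCongr (two_mul k)).trans finSumFinEquiv.symm)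
  obtain ⟨e, he⟩ := exists_basis_span_eq_of_span_eq_top b hspan (by simp [hU, two_mul])
  refine ⟨e.smulGraph I, by simp [Basis.finrank_smulGraph], ?_⟩
  rw [← he]
  exact e.restrictScalars_smulGraph_I_inf_span_real_eq_bot
end

section
/- Let F be a field, let M ≥ r ≥ 0 be integers, and let I be a prime ideal of the polynomial ring F[X₀, …, X_M] with X₀ ∉ I. Let Q be the fraction field of the integral domain F[X₀, …, X_M]/I, and for 1 ≤ i ≤ r let u_i ∈ Q be the image of X_i divided by the image of X₀. Assume that u₁, …, u_r are algebraically independent over F. Then I contains no nonzero homogeneous polynomial involving only the variables X₀, …, X_r; consequently, for every integer d ≥ 0, the composition F[X₀, …, X_r]_d → F[X₀, …, X_M]_d → F[X₀, …, X_M]_d / I_d is injective, and hence dim_F (F[X₀, …, X_M]_d / I_d) ≥ binom(r + d, r). -/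
/-!
Write `x_j` for the image of `X_j` in `Q`. A polynomial `p` that is homogeneous of degree `d`
satisfies `p(x₀, …, x_r) = x₀ ^ d · p(1, u₁, …, u_r)`, so for `p ∈ I` algebraic independence
of the `u_i` kills the dehomogenization `p(1, Y₁, …, Y_r)`. The same scaling identity, applied
in the fraction field of `F[X₀, …, X_r]` to `X₁ / X₀, …, X_r / X₀`, shows that a homogeneous
polynomial is determined by its dehomogenization, hence `p = 0`. Consequently the degree `d`
forms in `X₀, …, X_r`, a space of dimension `binom(r + d, r)`, embed into
`F[X₀, …, X_M]_d / I_d`.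
-/

open MvPolynomial

universe u v w z

namespace MvPolynomial

theorem IsHomogeneous.aeval_smul {R S σ : Type*} [CommSemiring R] [CommSemiring S] [Algebra R S]
    {p : MvPolynomial σ R} {d : ℕ} (hp : p.IsHomogeneous d) (c : S) (x : σ → S) :
    MvPolynomial.aeval (c • x) p = c ^ d * MvPolynomial.aeval x p := by
  conv_lhs => rw [p.as_sum]
  conv_rhs => rw [p.as_sum]
  simp only [map_sum, Finset.mul_sum, aeval_monomial, Pi.smul_apply, smul_eq_mul, mul_pow,
    Finsupp.prod_mul]
  refine Finset.sum_congr rfl fun s hs => ?_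
  rw [Finsupp.prod, Finset.prod_pow_eq_pow_sum, ← hp.degree_eq_sum_deg_support hs]
  ring

theorem IsHomogeneous.aeval_eq_pow_mul_aeval_cons_one {R K : Type*} [CommSemiring R] [Field K]
    [Algebra R K] {n d : ℕ} {p : MvPolynomial (Fin (n + 1)) R} (hp : p.IsHomogeneous d)
    {x : Fin (n + 1) → K} (hx : x 0 ≠ 0) :
    MvPolynomial.aeval x p =
      x 0 ^ d * MvPolynomial.aeval (Fin.cons 1 fun i => x i.succ / x 0) p := by
  have hx_eq : x = x 0 • Fin.cons (1 : K) fun i => x i.succ / x 0 := by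
    ext j
    refine Fin.cases ?_ (fun i => ?_) j
    · simp
    · simp [mul_div_cancel₀ _ hx]
  conv_lhs => rw [hx_eq]
  exact hp.aeval_smul _ _

noncomputable def dehomogenize (R : Type*) [CommSemiring R] (n : ℕ) :
    MvPolynomial (Fin (n + 1)) R →ₐ[R] MvPolynomial (Fin n) R :=
  aeval (Fin.cons 1 X)

theorem aeval_dehomogenize {R S : Type*} [CommSemiring R] [CommSemiring S] [Algebra R S] {n : ℕ}
    (y : Fin n → S) (p : MvPolynomial (Fin (n + 1)) R) :
    aeval y (dehomogenize R n p) = aeval (Fin.cons 1 y) p := by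
  rw [dehomogenize, comp_aeval_apply]
  congr 1
  ext j
  refine Fin.cases ?_ (fun i => ?_) j <;> simp

section CommRing

variable {R : Type*} [CommRing R] [IsDomain R] {n d : ℕ} {p : MvPolynomial (Fin (n + 1)) R}

theorem IsHomogeneous.eq_zero_of_dehomogenize_eq_zero (hp : p.IsHomogeneous d)
    (h : dehomogenize R n p = 0) : p = 0 := by
  let K := FractionRing (MvPolynomial (Fin (n + 1)) R)
  let x : Fin (n + 1) → K := algebraMap (MvPolynomial _ R) K ∘ X
  have hx : x 0 ≠ 0 := by simp [x]
  have hdehom : MvPolynomial.aeval (Fin.cons 1 fun i => x i.succ / x 0) p = 0 := by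
    rw [← aeval_dehomogenize, h, map_zero]
  have : algebraMap (MvPolynomial (Fin (n + 1)) R) K p = 0 := by
    rw [← aeval_X_left_apply p, ← MvPolynomial.aeval_algebraMap_apply,
      hp.aeval_eq_pow_mul_aeval_cons_one hx, hdehom, mul_zero]
  simpa using this

theorem IsHomogeneous.eq_zero_of_aeval_eq_zero (hp : p.IsHomogeneous d) {K : Type*} [Field K]
    [Algebra R K] {x : Fin (n + 1) → K} (hx : x 0 ≠ 0)
    (hind : AlgebraicIndependent R fun i : Fin n => x i.succ / x 0)
    (h : MvPolynomial.aeval x p = 0) : p = 0 := by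
  refine hp.eq_zero_of_dehomogenize_eq_zero (hind.eq_zero_of_aeval_eq_zero _ ?_)
  rw [aeval_dehomogenize]
  rw [hp.aeval_eq_pow_mul_aeval_cons_one hx] at h
  exact (mul_eq_zero.mp h).resolve_left (pow_ne_zero _ hx)

end CommRing

theorem vars_rename_castLE_subset {R : Type*} [CommSemiring R] {r M : ℕ} (h : r + 1 ≤ M + 1)
    (p : MvPolynomial (Fin (r + 1)) R) :
    (↑(rename (Fin.castLE h) p).vars : Set (Fin (M + 1))) ⊆ {j | (j : ℕ) ≤ r} := by
  classical
  intro j hj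
  obtain ⟨i, -, rfl⟩ := Finset.mem_image.mp (vars_rename _ p hj)
  exact Nat.le_of_lt_succ i.2

theorem exists_rename_castLE_eq_of_vars_subset {R : Type*} [CommSemiring R] {r M : ℕ}
    (h : r + 1 ≤ M + 1) {p : MvPolynomial (Fin (M + 1)) R}
    (hp : (↑p.vars : Set (Fin (M + 1))) ⊆ {j | (j : ℕ) ≤ r}) :
    ∃ q : MvPolynomial (Fin (r + 1)) R, rename (Fin.castLE h) q = p :=
  exists_rename_eq_of_vars_subset_range p _ (Fin.castLE_injective h) fun j hj =>
    ⟨⟨j, Nat.lt_succ_of_le (hp hj)⟩, rfl⟩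

theorem IsHomogeneous.eq_zero_of_aeval_eq_zero_of_vars_subset {R K : Type*} [CommRing R]
    [IsDomain R] [Field K] [Algebra R K] {M r d : ℕ} (hr : r + 1 ≤ M + 1)
    {x : Fin (M + 1) → K} (hx : x 0 ≠ 0)
    (hind : AlgebraicIndependent R fun i : Fin r => x (Fin.castLE hr i.succ) / x 0)
    {p : MvPolynomial (Fin (M + 1)) R} (hp : p.IsHomogeneous d)
    (hvars : (↑p.vars : Set (Fin (M + 1))) ⊆ {j | (j : ℕ) ≤ r})
    (h : MvPolynomial.aeval x p = 0) : p = 0 := by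
  obtain ⟨q, rfl⟩ := exists_rename_castLE_eq_of_vars_subset hr hvars
  rw [rename_isHomogeneous_iff (Fin.castLE_injective hr)] at hp
  rw [aeval_rename] at h
  rw [hp.eq_zero_of_aeval_eq_zero (x := x ∘ Fin.castLE hr) hx hind h, map_zero]

theorem injOn_setOf_isHomogeneous_vars_subset {R S σ : Type*} [CommRing R] [Ring S]
    (f : MvPolynomial σ R →+* S) (s : Set σ) (d : ℕ)
    (h : ∀ p : MvPolynomial σ R, p.IsHomogeneous d → ↑p.vars ⊆ s → f p = 0 → p = 0) :
    Set.InjOn f {p | p.IsHomogeneous d ∧ ↑p.vars ⊆ s} := by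
  classical
  rintro p ⟨hp, hpvars⟩ q ⟨hq, hqvars⟩ hpq
  refine sub_eq_zero.mp (h _ (hp.sub hq) (fun j hj => ?_) (by rw [map_sub, hpq, sub_self]))
  exact (Finset.mem_union.mp (vars_sub_subset (p := p) (q := q) hj)).elim
    (fun hj => hpvars hj) (fun hj => hqvars hj)

theorem aeval_algebraMap_quotient_mk_X {R σ K : Type*} [CommRing R] {I : Ideal (MvPolynomial σ R)}
    [CommRing K] [Algebra (MvPolynomial σ R ⧸ I) K] [Algebra R K]
    [IsScalarTower R (MvPolynomial σ R ⧸ I) K] (p : MvPolynomial σ R) :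
    aeval (fun j => algebraMap (MvPolynomial σ R ⧸ I) K (Ideal.Quotient.mk I (X j))) p =
      algebraMap (MvPolynomial σ R ⧸ I) K (Ideal.Quotient.mk I p) := by
  rw [show (fun j => algebraMap _ K (Ideal.Quotient.mk I (X j))) =
      algebraMap _ K ∘ fun j => Ideal.Quotient.mkₐ R I (X j) from rfl,
    aeval_algebraMap_apply, ← comp_aeval_apply, aeval_X_left_apply, Ideal.Quotient.mkₐ_eq_mk]

theorem rank_homogeneousSubmodule {σ : Type*} [Fintype σ] (R : Type*) [CommRing R]
    [StrongRankCondition R] (n : ℕ) :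
    Module.rank R (homogeneousSubmodule σ R n) = ((Fintype.card σ + n - 1).choose n : ℕ) := by
  classical
  let e : {d : σ →₀ ℕ | d.degree = n} ≃ Sym σ n := (Sym.equivNatSum σ n).symm
  rw [homogeneousSubmodule_eq_finsupp_supported,
    (AddMonoidAlgebra.supportedEquivFinsupp _).rank_eq, rank_finsupp_self, Cardinal.mk_congr e,
    Cardinal.mk_fintype, Cardinal.lift_natCast, Sym.card_sym_eq_choose]

theorem lift_rank_homogeneousSubmodule_le_lift_rank_map {σ : Type u} {τ : Type v}
    {R : Type w} {N : Type z} [CommRing R] [AddCommGroup N] [Module R N] {e : σ → τ}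
    (he : Function.Injective e) (f : MvPolynomial τ R →ₗ[R] N) {d : ℕ}
    (hf : Set.InjOn f (rename e '' homogeneousSubmodule σ R d)) :
    Cardinal.lift.{z} (Module.rank R (homogeneousSubmodule σ R d)) ≤
      Cardinal.lift.{max u w} (Module.rank R (Submodule.map f (homogeneousSubmodule τ R d))) := by
  have hmaps : ∀ p ∈ homogeneousSubmodule σ R d,
      (f ∘ₗ (rename e).toLinearMap) p ∈ Submodule.map f (homogeneousSubmodule τ R d) :=
    fun p hp => ⟨rename e p, hp.rename_isHomogeneous, rfl⟩
  refine LinearMap.lift_rank_le_of_injective ((f ∘ₗ (rename e).toLinearMap).restrict hmaps) ?_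
  intro p q hpq
  exact Subtype.ext <| rename_injective e he <|
    hf ⟨p, p.2, rfl⟩ ⟨q, q.2, rfl⟩ (congrArg Subtype.val hpq)

end MvPolynomial

/-- Let `F` be a field, `M ≥ r ≥ 0`, and `I` a prime ideal of
`F[X₀, …, X_M]` with `X₀ ∉ I`.  Let `Q` be the fraction field of `F[X₀, …, X_M]/I` and for
`1 ≤ i ≤ r` let `uᵢ ∈ Q` be the image of `Xᵢ` divided by the image of `X₀`.  If
`u₁, …, u_r` are algebraically independent over `F`, then `I` contains no nonzero
homogeneous polynomial involving only the variables `X₀, …, X_r`; consequently for every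
`d ≥ 0` the composition `F[X₀, …, X_r]_d → F[X₀, …, X_M]_d → F[X₀, …, X_M]_d / I_d` is
injective, and hence `dim_F (F[X₀, …, X_M]_d / I_d) ≥ binom (r + d) r`. -/
theorem hilbert_function_lower_bound_of_algebraically_independent
    (F : Type*) [Field F] (M r : ℕ) (hr : r ≤ M)
    (I : Ideal (MvPolynomial (Fin (M + 1)) F)) [I.IsPrime]
    (hX0 : MvPolynomial.X 0 ∉ I)
    (u : Fin r → FractionRing (MvPolynomial (Fin (M + 1)) F ⧸ I))
    (hu : ∀ i : Fin r, u i =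
      algebraMap (MvPolynomial (Fin (M + 1)) F ⧸ I) _
          (Ideal.Quotient.mk I (MvPolynomial.X ⟨(i : ℕ) + 1, by omega⟩)) /
        algebraMap (MvPolynomial (Fin (M + 1)) F ⧸ I) _
          (Ideal.Quotient.mk I (MvPolynomial.X 0)))
    (hind : ∀ p : MvPolynomial (Fin r) F,
      MvPolynomial.eval₂
        ((algebraMap (MvPolynomial (Fin (M + 1)) F ⧸ I)
            (FractionRing (MvPolynomial (Fin (M + 1)) F ⧸ I))).comp
          (algebraMap F (MvPolynomial (Fin (M + 1)) F ⧸ I))) u p = 0 → p = 0) :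
    (∀ p ∈ I, ∀ d : ℕ, p.IsHomogeneous d →
        (↑p.vars : Set (Fin (M + 1))) ⊆ {j : Fin (M + 1) | (j : ℕ) ≤ r} → p = 0) ∧
    (∀ d : ℕ, Set.InjOn (Ideal.Quotient.mk I)
        {p : MvPolynomial (Fin (M + 1)) F | p.IsHomogeneous d ∧
          (↑p.vars : Set (Fin (M + 1))) ⊆ {j : Fin (M + 1) | (j : ℕ) ≤ r}}) ∧
    (∀ d : ℕ, ((r + d).choose r : Cardinal) ≤
      Module.rank F ↥(Submodule.map (Ideal.Quotient.mkₐ F I).toLinearMap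
        (MvPolynomial.homogeneousSubmodule (Fin (M + 1)) F d))) := by
  let A := MvPolynomial (Fin (M + 1)) F ⧸ I
  have hr' : r + 1 ≤ M + 1 := Nat.succ_le_succ hr
  let x : Fin (M + 1) → FractionRing A := fun j => algebraMap A _ (Ideal.Quotient.mk I (X j))
  have hx0 : x 0 ≠ 0 := by
    rwa [ne_eq, IsFractionRing.to_map_eq_zero_iff, Ideal.Quotient.eq_zero_iff_mem]
  have hind' : AlgebraicIndependent F fun i : Fin r => x (Fin.castLE hr' i.succ) / x 0 := by
    have hu' : u = fun i => x (Fin.castLE hr' i.succ) / x 0 := funext hu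
    rw [← hu', algebraicIndependent_iff]
    exact fun p hp => hind p (by rwa [aeval_def, IsScalarTower.algebraMap_eq F A] at hp)
  have hzero : ∀ p ∈ I, ∀ d : ℕ, p.IsHomogeneous d →
      (↑p.vars : Set (Fin (M + 1))) ⊆ {j : Fin (M + 1) | (j : ℕ) ≤ r} → p = 0 :=
    fun p hpI d hp hvars => hp.eq_zero_of_aeval_eq_zero_of_vars_subset hr' hx0 hind' hvars
      (by rw [aeval_algebraMap_quotient_mk_X, Ideal.Quotient.eq_zero_iff_mem.mpr hpI, map_zero])
  have hinj := fun d => injOn_setOf_isHomogeneous_vars_subset (Ideal.Quotient.mk I) _ d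
    fun p hp hvars hpI => hzero p (Ideal.Quotient.eq_zero_iff_mem.mp hpI) d hp hvars
  refine ⟨hzero, hinj, fun d => ?_⟩
  have hrank := lift_rank_homogeneousSubmodule_le_lift_rank_map (Fin.castLE_injective hr')
    (Ideal.Quotient.mkₐ F I).toLinearMap (d := d) <| (hinj d).mono <| by
      rintro _ ⟨q, hq, rfl⟩
      exact ⟨IsHomogeneous.rename_isHomogeneous hq, vars_rename_castLE_subset hr' q⟩
  rw [rank_homogeneousSubmodule, Fintype.card_fin, Nat.add_right_comm, Nat.add_sub_cancel,
    ← Nat.choose_symm_add] at hrank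
  simpa using hrank
end
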